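/- arXiv:1204.3842 — 7 statements merged into one kernel-verified Lean document; each statement's English description precedes it below -/
import Mathlib

section
/- The number of assembly trees of the star graph $S_n = K_{1,n}$ (using the edge gluing rule) is $n!$. -/
/-!
In an assembly tree of the star `K_{1,n}` every gluing edge passes through the center, so every
node with at least two vertices contains the center. The nodes containing the center therefore
form a chain, and the remaining nodes are leaf singletons, at most `n` of them. Since there are
`2n + 1` nodes in all, the chain has `n + 1` members, one of each size `1, …, n + 1`: it is a
maximal chain, i.e. an ordering of the leaves. Conversely every ordering of the leaves, glued on
to the center one at a time, gives an assembly tree.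
-/

/-- The family of labels of an assembly tree (edge gluing rule) for a graph `G`:
all singletons, the full vertex set, laminar, with each non-singleton member
split into two disjoint members joined by an edge of `G`; the cardinality
`2|V| - 1` forces the family to be exactly the node labels of a rooted binary
tree with `|V|` leaves. Two assembly trees are equal iff there is a
label-preserving isomorphism, iff they have the same label family. -/
def IsAssemblyFamily {V : Type*} [Fintype V] [DecidableEq V]
    (G : SimpleGraph V) (F : Finset (Finset V)) : Prop :=
  (∀ v : V, {v} ∈ F) ∧
  (Finset.univ ∈ F) ∧
  (∀ U ∈ F, U.Nonempty) ∧
  (∀ U₁ ∈ F, ∀ U₂ ∈ F, U₁ ⊆ U₂ ∨ U₂ ⊆ U₁ ∨ Disjoint U₁ U₂) ∧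
  (∀ U ∈ F, 2 ≤ U.card → ∃ U₁ ∈ F, ∃ U₂ ∈ F, Disjoint U₁ U₂ ∧ U₁ ∪ U₂ = U ∧
      ∃ v₁ ∈ U₁, ∃ v₂ ∈ U₂, G.Adj v₁ v₂) ∧
  F.card = 2 * Fintype.card V - 1

/-- The number of assembly trees of `G` using the edge gluing rule. -/
noncomputable def assemblyTreeCount {V : Type*} [Fintype V] [DecidableEq V]
    (G : SimpleGraph V) : ℕ :=
  Nat.card {F : Finset (Finset V) // IsAssemblyFamily G F}

open Finset Equiv

section Chain
variable {α : Type*} {C : Finset (Finset α)}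

theorem subset_of_card_le_of_isChain (hC : IsChain (· ⊆ ·) (C : Set (Finset α)))
    {s t : Finset α} (hs : s ∈ C) (ht : t ∈ C) (hst : #s ≤ #t) : s ⊆ t := by
  rcases hC.total hs ht with h | h
  · exact h
  · rw [eq_of_subset_of_card_le h hst]

theorem exists_card_eq_of_isChain [Fintype α] (hC : IsChain (· ⊆ ·) (C : Set (Finset α)))
    (hcard : Fintype.card α + 1 ≤ #C) {k : ℕ} (hk : k ≤ Fintype.card α) :
    ∃ s ∈ C, #s = k := by
  have hsurj := surjOn_of_injOn_of_card_le (t := range (Fintype.card α + 1)) card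
    (fun s _ => mem_range.2 (Nat.lt_succ_of_le (card_le_univ s)))
    (fun s hs t ht hst => (subset_of_card_le_of_isChain hC hs ht hst.le).antisymm
      (subset_of_card_le_of_isChain hC ht hs hst.ge))
    (by rwa [card_range])
  exact hsurj (mem_range.2 (Nat.lt_succ_of_le hk))

end Chain

theorem exists_perm_eq_filter_lt_of_monotone {n : ℕ} {B : ℕ → Finset (Fin n)}
    (hB : Monotone B) (hcard : ∀ k, #(B k) = min n k) :
    ∃ τ : Perm (Fin n), ∀ k, B k = ({x | (τ x : ℕ) < k} : Finset (Fin n)) := by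
  have hB0 : B 0 = ∅ := card_eq_zero.1 ((hcard 0).trans (min_zero n))
  have hBn : B n = univ := eq_univ_of_card _ ((hcard n).trans (by simp))
  have hex (x : Fin n) : ∃ m, x ∈ B (m + 1) := ⟨n, hB n.le_succ (hBn ▸ mem_univ x)⟩
  -- `x` enters the chain at stage `f x + 1`.
  let f (x : Fin n) : ℕ := Nat.find (hex x)
  have hf (x : Fin n) : ∀ k, f x < k ↔ x ∈ B k
    | 0 => by simp [hB0]
    | k + 1 => by
      simp only [Nat.lt_succ_iff, f, Nat.find_le_iff]
      exact ⟨fun ⟨m, hm, hx⟩ => hB (by omega) hx, fun hx => ⟨k, le_rfl, hx⟩⟩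
  let g (x : Fin n) : Fin n := ⟨f x, (hf x n).2 (hBn ▸ mem_univ x)⟩
  have hg : Function.Injective g := fun x y hxy => by
    have hone : #(B (f x + 1) \ B (f x)) ≤ 1 := by
      rw [card_sdiff_of_subset (hB (f x).le_succ), hcard, hcard]
      omega
    replace hxy : f x = f y := congrArg Fin.val hxy
    refine card_le_one.1 hone x ?_ y ?_ <;> simp only [mem_sdiff, ← hf] <;> omega
  refine ⟨ofBijective g (Finite.injective_iff_bijective.1 hg), fun k => ?_⟩
  ext x
  simp [g, ← hf]

lemma univ_disjSum_toRight {α β : Type*} [Fintype α] [Subsingleton α] {U : Finset (α ⊕ β)}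
    {a : α} (h : Sum.inl a ∈ U) : univ.disjSum U.toRight = U :=
  disjSum_eq_iff.2 ⟨(eq_univ_of_forall fun b => by simpa [Subsingleton.elim b a]).symm, rfl⟩

namespace IsAssemblyFamily
variable {n : ℕ} {F : Finset (Finset (Fin 1 ⊕ Fin n))}

lemma inl_mem_of_two_le_card (hF : IsAssemblyFamily (completeBipartiteGraph (Fin 1) (Fin n)) F)
    {U : Finset (Fin 1 ⊕ Fin n)} (hU : U ∈ F) (h2 : 2 ≤ #U) : Sum.inl 0 ∈ U := by
  obtain ⟨U₁, -, U₂, -, -, rfl, v₁, hv₁, v₂, hv₂, hadj⟩ := hF.2.2.2.2.1 U hU h2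
  rcases v₁ with i₁ | x₁ <;> rcases v₂ with i₂ | x₂ <;> simp at hadj
  · exact mem_union_left _ (Subsingleton.elim i₁ 0 ▸ hv₁)
  · exact mem_union_right _ (Subsingleton.elim i₂ 0 ▸ hv₂)

lemma lt_card_filter_inl_mem (hF : IsAssemblyFamily (completeBipartiteGraph (Fin 1) (Fin n)) F) :
    n < #{U ∈ F | Sum.inl 0 ∈ U} := by
  have hleaf : {U ∈ F | Sum.inl 0 ∉ U} ⊆ univ.image fun x : Fin n => {Sum.inr x} := by
    intro U hU
    obtain ⟨hUF, hU0⟩ := mem_filter.1 hU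
    have h1 : #U = 1 := by
      have := (hF.2.2.1 U hUF).card_pos
      by_contra h
      exact hU0 (hF.inl_mem_of_two_le_card hUF (by omega))
    obtain ⟨(i | x), rfl⟩ := card_eq_one.1 h1
    · simp [Subsingleton.elim i 0] at hU0
    · simp
  have hleaf_card := (card_le_card hleaf).trans card_image_le
  have hsplit := card_filter_add_card_filter_not (s := F) (fun U => Sum.inl 0 ∈ U)
  have hF_card := hF.2.2.2.2.2
  simp only [card_univ, Fintype.card_fin, Fintype.card_sum] at hleaf_card hF_card
  omega

lemma isChain_image_toRight (hF : IsAssemblyFamily (completeBipartiteGraph (Fin 1) (Fin n)) F) :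
    IsChain (· ⊆ ·) ({U ∈ F | Sum.inl 0 ∈ U}.image toRight : Set (Finset (Fin n))) := by
  rw [coe_image]
  refine IsChain.image_of_map_rel (α := Finset (Fin 1 ⊕ Fin n)) (· ⊆ ·) (· ⊆ ·) toRight
    (fun _ _ => toRight_subset_toRight) ?_
  rintro U hU W hW -
  simp only [mem_coe, mem_filter] at hU hW
  rcases hF.2.2.2.1 U hU.1 W hW.1 with h | h | h
  · exact Or.inl h
  · exact Or.inr h
  · exact absurd hW.2 (disjoint_left.1 h hU.2)

end IsAssemblyFamily

namespace StarGraph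
variable {n : ℕ}

/-- `τ x` is the step at which leaf `x` is glued on; `chainSet τ k` is the node built after `k`
steps. -/
def chainSet (τ : Perm (Fin n)) (k : ℕ) : Finset (Fin 1 ⊕ Fin n) :=
  univ.disjSum {x | (τ x : ℕ) < k}

@[simp] lemma inl_mem_chainSet (τ : Perm (Fin n)) (k : ℕ) (i : Fin 1) :
    Sum.inl i ∈ chainSet τ k :=
  inl_mem_disjSum.2 (mem_univ i)

@[simp] lemma inr_mem_chainSet {τ : Perm (Fin n)} {k : ℕ} {x : Fin n} :
    Sum.inr x ∈ chainSet τ k ↔ (τ x : ℕ) < k := by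
  simp [chainSet]

lemma card_chainSet (τ : Perm (Fin n)) (k : ℕ) : #(chainSet τ k) = min n k + 1 := by
  rw [chainSet, card_disjSum, card_univ, Fintype.card_fin, add_comm,
    ← Fin.card_filter_val_lt, ← card_map τ.toEmbedding]
  congr 2
  ext x
  simp

lemma chainSet_mono (τ : Perm (Fin n)) : Monotone (chainSet τ) := by
  intro k l hkl
  rintro (i | x) hx
  · simp
  · simp only [inr_mem_chainSet] at hx ⊢; omega

lemma chainSet_succ (τ : Perm (Fin n)) (i : Fin n) :
    chainSet τ (i + 1) = chainSet τ i ∪ {Sum.inr (τ.symm i)} := by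
  ext (j | x)
  · simp
  · simp [Equiv.eq_symm_apply, le_iff_eq_or_lt, Fin.val_inj]

def starFamily (τ : Perm (Fin n)) : Finset (Finset (Fin 1 ⊕ Fin n)) :=
  univ.image singleton ∪ univ.image fun i : Fin n => chainSet τ (i + 1)

lemma mem_starFamily {τ : Perm (Fin n)} {U : Finset (Fin 1 ⊕ Fin n)} :
    U ∈ starFamily τ ↔ (∃ v, {v} = U) ∨ ∃ i : Fin n, chainSet τ (i + 1) = U := by
  simp [starFamily]

lemma chainSet_succ_mem_starFamily (τ : Perm (Fin n)) (i : Fin n) :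
    chainSet τ (i + 1) ∈ starFamily τ :=
  mem_starFamily.2 (Or.inr ⟨i, rfl⟩)

lemma chainSet_mem_starFamily (τ : Perm (Fin n)) {k : ℕ} (hk : k ≤ n) :
    chainSet τ k ∈ starFamily τ := by
  cases k with
  | zero =>
    obtain ⟨v, hv⟩ := card_eq_one.1 ((card_chainSet τ 0).trans (by simp))
    exact mem_starFamily.2 (Or.inl ⟨v, hv.symm⟩)
  | succ k => exact chainSet_succ_mem_starFamily τ ⟨k, hk⟩

lemma card_starFamily (τ : Perm (Fin n)) : #(starFamily τ) = 2 * n + 1 := by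
  have hcard (i : Fin n) : #(chainSet τ (i + 1)) = i + 2 := by
    rw [card_chainSet, min_eq_right (by omega)]
  rw [starFamily, card_union_of_disjoint, card_image_of_injective _ singleton_injective,
    card_image_of_injective, card_univ, card_univ, Fintype.card_sum, Fintype.card_fin,
    Fintype.card_fin]
  · omega
  · intro i j hij
    have := congrArg card hij
    rw [hcard, hcard] at this
    omega
  · rw [disjoint_left]
    simp only [mem_image, mem_univ, true_and, not_exists, forall_exists_index]
    rintro _ v rfl i hi
    have := congrArg card hi
    rw [hcard, card_singleton] at this
    omega

lemma isAssemblyFamily_starFamily (τ : Perm (Fin n)) :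
    IsAssemblyFamily (completeBipartiteGraph (Fin 1) (Fin n)) (starFamily τ) := by
  refine ⟨fun v => mem_starFamily.2 (Or.inl ⟨v, rfl⟩), ?_, ?_, ?_, ?_, ?_⟩
  · rw [← eq_univ_of_card (chainSet τ n) (by simp [card_chainSet, add_comm])]
    exact chainSet_mem_starFamily τ le_rfl
  · intro U hU
    rcases mem_starFamily.1 hU with ⟨v, rfl⟩ | ⟨i, rfl⟩
    · exact singleton_nonempty v
    · exact ⟨Sum.inl 0, inl_mem_chainSet τ _ 0⟩
  · have singleton_laminar (v : Fin 1 ⊕ Fin n) (U : Finset (Fin 1 ⊕ Fin n)) :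
        {v} ⊆ U ∨ Disjoint {v} U :=
      (em (v ∈ U)).imp singleton_subset_iff.2 disjoint_singleton_left.2
    intro U₁ h₁ U₂ h₂
    rcases mem_starFamily.1 h₁ with ⟨v, rfl⟩ | ⟨i, rfl⟩
    · exact (singleton_laminar v U₂).imp_right Or.inr
    rcases mem_starFamily.1 h₂ with ⟨w, rfl⟩ | ⟨j, rfl⟩
    · exact (singleton_laminar w _).elim (Or.inr ∘ Or.inl) fun h => Or.inr (Or.inr h.symm)
    · rcases le_total (i : ℕ) j with h | h
      · exact Or.inl (chainSet_mono τ (by omega))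
      · exact Or.inr (Or.inl (chainSet_mono τ (by omega)))
  · intro U hU hU2
    rcases mem_starFamily.1 hU with ⟨v, rfl⟩ | ⟨i, rfl⟩
    · simp at hU2
    refine ⟨chainSet τ i, chainSet_mem_starFamily τ i.is_lt.le, {Sum.inr (τ.symm i)},
      mem_starFamily.2 (Or.inl ⟨_, rfl⟩), by simp, (chainSet_succ τ i).symm,
      Sum.inl 0, inl_mem_chainSet τ _ 0, _, mem_singleton_self _, by simp⟩
  · rw [card_starFamily, Fintype.card_sum, Fintype.card_fin, Fintype.card_fin]
    omega

lemma starFamily_injective : Function.Injective (starFamily (n := n)) := by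
  have key {τ τ' : Perm (Fin n)} (h : starFamily τ = starFamily τ') (x : Fin n) :
      (τ' x : ℕ) ≤ τ x := by
    have hmem := h ▸ chainSet_succ_mem_starFamily τ (τ x)
    rcases mem_starFamily.1 hmem with ⟨v, hv⟩ | ⟨i, hi⟩
    · have := congrArg card hv
      simp [card_chainSet] at this
    · have hcard := congrArg card hi
      simp only [card_chainSet] at hcard
      have hx : Sum.inr x ∈ chainSet τ' (i + 1) := by simp [hi]
      rw [inr_mem_chainSet] at hx
      omega
  intro τ τ' h
  ext x
  exact le_antisymm (key h.symm x) (key h x)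

lemma exists_starFamily_eq {F : Finset (Finset (Fin 1 ⊕ Fin n))}
    (hF : IsAssemblyFamily (completeBipartiteGraph (Fin 1) (Fin n)) F) :
    ∃ τ, starFamily τ = F := by
  set C := {U ∈ F | Sum.inl 0 ∈ U}.image toRight
  have hC : #C = #{U ∈ F | Sum.inl 0 ∈ U} :=
    card_image_of_injOn fun U hU W hW h => by
      rw [← univ_disjSum_toRight (mem_filter.1 hU).2,
        ← univ_disjSum_toRight (mem_filter.1 hW).2, h]
  have hcardC : Fintype.card (Fin n) + 1 ≤ #C := by
    rw [hC, Fintype.card_fin]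
    exact hF.lt_card_filter_inl_mem
  choose B hBC hBcard using fun k =>
    exists_card_eq_of_isChain hF.isChain_image_toRight hcardC (k := min n k) (by simp)
  have hB : Monotone B := fun k l hkl =>
    subset_of_card_le_of_isChain hF.isChain_image_toRight (hBC k) (hBC l) (by simp [hBcard]; omega)
  obtain ⟨τ, hτ⟩ := exists_perm_eq_filter_lt_of_monotone hB hBcard
  have hchain (k : ℕ) : chainSet τ k ∈ F := by
    obtain ⟨U, hU, hUB⟩ := mem_image.1 (hBC k)
    rw [chainSet, ← hτ, ← hUB, univ_disjSum_toRight (mem_filter.1 hU).2]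
    exact (mem_filter.1 hU).1
  refine ⟨τ, eq_of_subset_of_card_le (fun U hU => ?_) ?_⟩
  · rcases mem_starFamily.1 hU with ⟨v, rfl⟩ | ⟨i, rfl⟩
    · exact hF.1 v
    · exact hchain _
  · rw [card_starFamily, hF.2.2.2.2.2, Fintype.card_sum, Fintype.card_fin, Fintype.card_fin]
    omega

end StarGraph

/-- The number of assembly trees of the star `Sₙ = K_{1,n}` is `n!`. -/
theorem assemblyTreeCount_star (n : ℕ) :
    assemblyTreeCount (completeBipartiteGraph (Fin 1) (Fin n)) = n.factorial := by
  have hbij : Function.Bijective fun τ : Perm (Fin n) =>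
      (⟨StarGraph.starFamily τ, StarGraph.isAssemblyFamily_starFamily τ⟩ :
        {F // IsAssemblyFamily (completeBipartiteGraph (Fin 1) (Fin n)) F}) := by
    refine ⟨fun τ τ' h => StarGraph.starFamily_injective (congrArg Subtype.val h), ?_⟩
    rintro ⟨F, hF⟩
    obtain ⟨τ, hτ⟩ := StarGraph.exists_starFamily_eq hF
    exact ⟨τ, Subtype.ext hτ⟩
  rw [assemblyTreeCount, ← Nat.card_eq_of_bijective _ hbij, Nat.card_perm, Nat.card_fin]
end

section
/- The number of assembly trees of the spider graph $S^2_n$ with $n$ legs each of length $2$ (using the edge gluing rule) is $\sum_{k=0}^n \binom{n}{k} \frac{(2n-k)!}{2^{n-k}}$. -/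
/-- The spider (star with `n` legs of length 2): a center `none`, and for each
`i : Fin n` a path `none — some (i, 0) — some (i, 1)`. -/
def spiderGraph (n : ℕ) : SimpleGraph (Option (Fin n × Fin 2)) :=
  SimpleGraph.fromRel (fun u v =>
    (u = none ∧ ∃ i, v = some (i, 0)) ∨ (∃ i, u = some (i, 0) ∧ v = some (i, 1)))

/-!
The members of an assembly family of the spider that avoid the centre are singletons and legs
`{some (i, 0), some (i, 1)}`; those containing the centre form a chain
`{none} = C₀ ⊂ C₁ ⊂ ⋯ ⊂ C_m = V`, each `Cₛ` obtained from `Cₛ₋₁` by gluing on one vertex or one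
leg assembled on its own. Counting members (`2|V| - 1 = 4n + 1` of them) gives `m = 2n - k`, where
`k` is the number of such legs. So an assembly tree amounts to a set `K` of `k` legs together with
an ordering of the `2n - k` blocks (the legs in `K` and the vertices of the other legs) in which the
inner vertex of each leg outside `K` comes before its outer vertex; there are
`(2n - k)! / 2^(n - k)` such orderings.
-/

open Finset Function

section AssemblyFamily

variable {V : Type*} [Fintype V] [DecidableEq V] {G : SimpleGraph V} {F : Finset (Finset V)}

theorem IsAssemblyFamily.induction_on (hF : IsAssemblyFamily G F) {P : Finset V → Prop}
    (singleton : ∀ v, P {v})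
    (union : ∀ A B a b, Disjoint A B → a ∈ A → b ∈ B → G.Adj a b → P A → P B → P (A ∪ B)) :
    ∀ U ∈ F, P U := by
  intro U
  induction U using Finset.strongInduction with
  | H U ih =>
    intro hU
    obtain ⟨v, hv⟩ := hF.2.2.1 U hU
    by_cases hcard : 2 ≤ #U
    · obtain ⟨A, hA, B, hB, hAB, rfl, a, ha, b, hb, hab⟩ := hF.2.2.2.2.1 U hU hcard
      have hA_ssubset : A ⊂ A ∪ B := left_lt_sup.2 fun h => disjoint_left.1 hAB (h hb) hb
      have hB_ssubset : B ⊂ A ∪ B := right_lt_sup.2 fun h => disjoint_left.1 hAB ha (h ha)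
      exact union A B a b hAB ha hb hab (ih A hA_ssubset hA) (ih B hB_ssubset hB)
    · obtain ⟨u, rfl⟩ := card_eq_one.1 (show #U = 1 by have := card_pos.2 ⟨v, hv⟩; omega)
      exact singleton u

theorem IsAssemblyFamily.isChain_filter_mem (hF : IsAssemblyFamily G F) (v : V) :
    IsChain (· ⊆ ·) (({U ∈ F | v ∈ U} : Finset (Finset V)) : Set (Finset V)) := by
  intro U₁ h₁ U₂ h₂ _
  simp only [coe_filter, Set.mem_ofPred_eq] at h₁ h₂
  rcases hF.2.2.2.1 U₁ h₁.1 U₂ h₂.1 with h | h | h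
  · exact Or.inl h
  · exact Or.inr h
  · exact absurd h₂.2 (disjoint_left.1 h h₁.2)

theorem IsAssemblyFamily.exists_split_of_mem (hF : IsAssemblyFamily G F) {U : Finset V}
    (hU : U ∈ F) (hcard : 2 ≤ #U) {v : V} (hv : v ∈ U) :
    ∃ A ∈ F, ∃ B ∈ F, v ∈ A ∧ A ⊂ U ∧ Disjoint A B ∧ A ∪ B = U := by
  obtain ⟨A, hA, B, hB, hAB, rfl, -⟩ := hF.2.2.2.2.1 U hU hcard
  obtain ⟨b, hb⟩ := hF.2.2.1 B hB
  rcases mem_union.1 hv with hvA | hvB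
  · exact ⟨A, hA, B, hB, hvA, left_lt_sup.2 fun h => disjoint_left.1 hAB (h hb) hb, hAB, rfl⟩
  · obtain ⟨a, ha⟩ := hF.2.2.1 A hA
    exact ⟨B, hB, A, hA, hvB, right_lt_sup.2 fun h => disjoint_left.1 hAB ha (h ha), hAB.symm,
      union_comm B A⟩

end AssemblyFamily

theorem Finset.laminar_singleton {α : Type*} (a : α) (U : Finset α) :
    {a} ⊆ U ∨ U ⊆ {a} ∨ Disjoint {a} U := by
  by_cases h : a ∈ U
  · exact Or.inl (singleton_subset_iff.2 h)
  · exact Or.inr (Or.inr (disjoint_singleton_left.2 h))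

theorem IsChain.mem_iff_card_filter_notMem_le {α : Type*} [DecidableEq α]
    {C : Finset (Finset α)} (hC : IsChain (· ⊆ ·) (C : Set (Finset α))) {U : Finset α}
    (hU : U ∈ C) (x : α) : x ∈ U ↔ #{U' ∈ C | x ∉ U'} ≤ #{U' ∈ C | U' ⊂ U} := by
  constructor
  · intro hx
    refine card_le_card fun U' hU' => ?_
    rw [mem_filter] at hU' ⊢
    refine ⟨hU'.1, ?_⟩
    rcases hC.total hU'.1 hU with h | h
    · exact ssubset_of_subset_of_ne h (by rintro rfl; exact hU'.2 hx)
    · exact absurd (h hx) hU'.2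
  · intro hle
    by_contra hx
    have hsub : insert U {U' ∈ C | U' ⊂ U} ⊆ {U' ∈ C | x ∉ U'} := by
      intro U' hU'
      rcases mem_insert.1 hU' with rfl | hU'
      · exact mem_filter.2 ⟨hU, hx⟩
      · rw [mem_filter] at hU' ⊢
        exact ⟨hU'.1, fun h => hx (hU'.2.subset h)⟩
    have := card_le_card hsub
    rw [card_insert_of_notMem (by simp)] at this
    omega

section FlipPairs

variable {α γ β : Type*}

def flipPairs (δ : γ → Fin 2) : Equiv.Perm (α ⊕ γ × Fin 2) :=
  Equiv.sumCongr (Equiv.refl α) (Equiv.prodShear (Equiv.refl γ) fun j => Equiv.addRight (δ j))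

@[simp] theorem flipPairs_inr (δ : γ → Fin 2) (j : γ) (x : Fin 2) :
    flipPairs δ (.inr (j, x) : α ⊕ γ × Fin 2) = .inr (j, x + δ j) := rfl

theorem flipPairs_flipPairs (δ : γ → Fin 2) (z : α ⊕ γ × Fin 2) :
    flipPairs δ (flipPairs δ z) = z := by
  rcases z with a | ⟨j, x⟩
  · rfl
  · simp only [flipPairs_inr, add_assoc]
    congr
    generalize δ j = d
    revert x d
    decide

variable [LinearOrder β]

def pairOrientation (f : α ⊕ γ × Fin 2 ≃ β) (j : γ) : Fin 2 :=
  if f (.inr (j, 0)) < f (.inr (j, 1)) then 0 else 1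

theorem pairOrientation_trans {e : α ⊕ γ × Fin 2 ≃ β} (he : ∀ j, e (.inr (j, 0)) < e (.inr (j, 1)))
    (δ : γ → Fin 2) : pairOrientation ((flipPairs δ).trans e) = δ := by
  funext j
  have hd : δ j = 0 ∨ δ j = 1 := by omega
  rcases hd with hd | hd <;>
    simp [pairOrientation, hd, he j, (he j).le, show (1 : Fin 2) + 1 = 0 from rfl]

theorem pairOrientation_increasing (f : α ⊕ γ × Fin 2 ≃ β) (j : γ) :
    (flipPairs (pairOrientation f)).trans f (.inr (j, 0)) <
      (flipPairs (pairOrientation f)).trans f (.inr (j, 1)) := by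
  simp only [Equiv.trans_apply, flipPairs_inr, pairOrientation]
  split_ifs with h
  · simpa using h
  · exact lt_of_le_of_ne (not_lt.1 h) (f.injective.ne (by simp))

-- Precomposing with `flipPairs δ` reorders each pair `(inr (j, 0), inr (j, 1))` as prescribed by
-- `δ j`, so every bijection is obtained from exactly one bijection increasing on all pairs.
def increasingEquivProdEquiv :
    {e : α ⊕ γ × Fin 2 ≃ β // ∀ j, e (.inr (j, 0)) < e (.inr (j, 1))} × (γ → Fin 2) ≃
      (α ⊕ γ × Fin 2 ≃ β) where
  toFun p := (flipPairs p.2).trans p.1.1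
  invFun f := (⟨(flipPairs (pairOrientation f)).trans f, pairOrientation_increasing f⟩,
    pairOrientation f)
  left_inv p := by
    obtain ⟨⟨e, he⟩, δ⟩ := p
    ext1
    · ext z
      simp [pairOrientation_trans he, flipPairs_flipPairs]
    · exact pairOrientation_trans he δ
  right_inv f := by
    ext z
    simp only [Equiv.trans_apply, flipPairs_flipPairs]

theorem card_increasing_equiv_mul_two_pow [Fintype α] [Fintype γ] [Fintype β]
    (h : Fintype.card (α ⊕ γ × Fin 2) = Fintype.card β) :
    Nat.card {e : α ⊕ γ × Fin 2 ≃ β // ∀ j, e (.inr (j, 0)) < e (.inr (j, 1))} *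
      2 ^ Fintype.card γ = (Fintype.card β).factorial := by
  classical
  have hδ : Nat.card (γ → Fin 2) = 2 ^ Fintype.card γ := by simp [Nat.card_eq_fintype_card]
  have hf : Nat.card (α ⊕ γ × Fin 2 ≃ β) = (Fintype.card β).factorial := by
    rw [Nat.card_eq_fintype_card, Fintype.card_equiv (Fintype.equivOfCardEq h), h]
  rw [← hδ, ← Nat.card_prod, Nat.card_congr increasingEquivProdEquiv, hf]

end FlipPairs

namespace Spider

variable {n : ℕ}

local notation "𝕍" n:max => Option (Fin n × Fin 2)

theorem adj_none_inner (i : Fin n) : (spiderGraph n).Adj none (some (i, 0)) := by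
  simp [spiderGraph]

theorem adj_inner_outer (i : Fin n) : (spiderGraph n).Adj (some (i, 0)) (some (i, 1)) := by
  simp [spiderGraph]

theorem eq_inner_of_adj_outer {u : 𝕍 n} {i : Fin n} (h : (spiderGraph n).Adj u (some (i, 1))) :
    u = some (i, 0) := by
  simp [spiderGraph] at h
  aesop

theorem fst_eq_of_adj {w w' : Fin n × Fin 2} (h : (spiderGraph n).Adj (some w) (some w')) :
    w.1 = w'.1 := by
  simp [spiderGraph] at h
  aesop

def leg (i : Fin n) : Finset (𝕍 n) := {some (i, 0), some (i, 1)}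

@[simp] theorem none_notMem_leg (i : Fin n) : none ∉ leg i := by simp [leg]

@[simp] theorem some_mem_leg {w : Fin n × Fin 2} {i : Fin n} : some w ∈ leg i ↔ w.1 = i := by
  obtain ⟨j, x⟩ := w
  fin_cases x <;> simp [leg]

theorem card_leg (i : Fin n) : #(leg i) = 2 := by simp [leg]

theorem leg_injective : Injective (leg (n := n)) := fun i j h => by
  have : some (i, 0) ∈ leg j := h ▸ some_mem_leg.2 rfl
  simpa using this

theorem disjoint_leg {i j : Fin n} (h : i ≠ j) : Disjoint (leg i) (leg j) := by
  rw [disjoint_left]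
  rintro (_ | w) hi hj
  · simp at hi
  · exact h ((some_mem_leg.1 hi).symm.trans (some_mem_leg.1 hj))

-- The nonempty pieces are exactly the vertex sets inducing connected subgraphs of the spider.
def IsPiece (U : Finset (𝕍 n)) : Prop :=
  (none ∈ U ∧ ∀ i, some (i, 1) ∈ U → some (i, 0) ∈ U) ∨ ∃ i, U ⊆ leg i

theorem isPiece_singleton (v : 𝕍 n) : IsPiece {v} := by
  cases v with
  | none => exact Or.inl ⟨mem_singleton_self _, by simp⟩
  | some w => exact Or.inr ⟨w.1, by simp⟩

theorem isPiece_union_of_none_mem {A B : Finset (𝕍 n)} {a b : 𝕍 n}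
    (hA : none ∈ A ∧ ∀ i, some (i, 1) ∈ A → some (i, 0) ∈ A) (hB : IsPiece B)
    (hAB : Disjoint A B) (ha : a ∈ A) (hb : b ∈ B) (hab : (spiderGraph n).Adj a b) :
    IsPiece (A ∪ B) := by
  obtain ⟨j, hBj⟩ : ∃ j, B ⊆ leg j :=
    hB.resolve_left fun h => disjoint_left.1 hAB hA.1 h.1
  refine Or.inl ⟨mem_union_left B hA.1, fun i hi => ?_⟩
  rcases mem_union.1 hi with hiA | hiB
  · exact mem_union_left B (hA.2 i hiA)
  by_contra hi₀
  obtain rfl : j = i := (some_mem_leg.1 (hBj hiB)).symm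
  have hb₁ : b = some (j, 1) := by
    have := hBj hb
    simp only [leg, mem_insert, mem_singleton] at this
    exact this.resolve_left fun h => hi₀ (mem_union_right A (h ▸ hb))
  subst hb₁
  exact hi₀ (mem_union_left B (eq_inner_of_adj_outer hab ▸ ha))

theorem isPiece_union {A B : Finset (𝕍 n)} {a b : 𝕍 n} (hA : IsPiece A) (hB : IsPiece B)
    (hAB : Disjoint A B) (ha : a ∈ A) (hb : b ∈ B) (hab : (spiderGraph n).Adj a b) :
    IsPiece (A ∪ B) := by
  by_cases hnA : none ∈ A
  · exact isPiece_union_of_none_mem (hA.resolve_right fun ⟨i, h⟩ => by simpa using h hnA)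
      hB hAB ha hb hab
  by_cases hnB : none ∈ B
  · rw [union_comm]
    exact isPiece_union_of_none_mem (hB.resolve_right fun ⟨i, h⟩ => by simpa using h hnB)
      hA hAB.symm hb ha hab.symm
  obtain ⟨i, hAi⟩ := hA.resolve_left fun h => hnA h.1
  obtain ⟨j, hBj⟩ := hB.resolve_left fun h => hnB h.1
  cases a with
  | none => exact absurd ha hnA
  | some w =>
    cases b with
    | none => exact absurd hb hnB
    | some w' =>
      have hij : i = j := by
        rw [← some_mem_leg.1 (hAi ha), ← some_mem_leg.1 (hBj hb), fst_eq_of_adj hab]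
      exact Or.inr ⟨i, union_subset hAi (hij ▸ hBj)⟩

-- `t w` is the step at which the vertex `some w` joins the component of the centre; the legs
-- in `K` join in one step, as a whole.
structure IsSchedule (K : Finset (Fin n)) (t : Fin n × Fin 2 → ℕ) : Prop where
  eq_of_mem : ∀ i ∈ K, t (i, 0) = t (i, 1)
  lt_of_notMem : ∀ i ∉ K, t (i, 0) < t (i, 1)
  ne_of_fst_ne : ∀ w w' : Fin n × Fin 2, w.1 ≠ w'.1 → t w ≠ t w'
  mem_Icc : ∀ w, t w ∈ Icc 1 (2 * n - #K)

abbrev Block (K : Finset (Fin n)) := {i // i ∈ K} ⊕ {i // i ∉ K} × Fin 2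

def blockOf (K : Finset (Fin n)) (w : Fin n × Fin 2) : Block K :=
  if h : w.1 ∈ K then .inl ⟨w.1, h⟩ else .inr (⟨w.1, h⟩, w.2)

def Block.rep {K : Finset (Fin n)} : Block K → Fin n × Fin 2
  | .inl i => (i, 0)
  | .inr (i, x) => (i, x)

variable {K : Finset (Fin n)} {t : Fin n × Fin 2 → ℕ}

theorem blockOf_of_mem {i : Fin n} (h : i ∈ K) (x : Fin 2) : blockOf K (i, x) = .inl ⟨i, h⟩ := by
  simp [blockOf, h]

theorem blockOf_of_notMem {i : Fin n} (h : i ∉ K) (x : Fin 2) :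
    blockOf K (i, x) = .inr (⟨i, h⟩, x) := by
  simp [blockOf, h]

theorem blockOf_rep (b : Block K) : blockOf K b.rep = b := by
  rcases b with i | ⟨i, x⟩
  · exact blockOf_of_mem i.2 0
  · exact blockOf_of_notMem i.2 x

theorem fst_rep_blockOf (w : Fin n × Fin 2) : (blockOf K w).rep.1 = w.1 := by
  unfold blockOf
  split_ifs <;> rfl

theorem card_block (K : Finset (Fin n)) : Fintype.card (Block K) = 2 * n - #K := by
  have hK : #K ≤ n := by simpa using card_le_univ K
  simp only [Fintype.card_sum, Fintype.card_prod, Fintype.card_coe, Fintype.card_fin,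
    Fintype.card_subtype_compl]
  omega

theorem IsSchedule.one_le_apply (ht : IsSchedule K t) (w : Fin n × Fin 2) : 1 ≤ t w :=
  (Finset.mem_Icc.1 (ht.mem_Icc w)).1

theorem IsSchedule.apply_le (ht : IsSchedule K t) (w : Fin n × Fin 2) : t w ≤ 2 * n - #K :=
  (Finset.mem_Icc.1 (ht.mem_Icc w)).2

theorem IsSchedule.fst_eq (ht : IsSchedule K t) {w w' : Fin n × Fin 2} (h : t w = t w') :
    w.1 = w'.1 :=
  not_not.1 fun hne => ht.ne_of_fst_ne w w' hne h

theorem IsSchedule.eq_of_notMem (ht : IsSchedule K t) {w w' : Fin n × Fin 2} (hw : w.1 ∉ K)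
    (h : t w = t w') : w = w' := by
  obtain ⟨i, x⟩ := w
  obtain ⟨j, y⟩ := w'
  obtain rfl : i = j := ht.fst_eq h
  have := ht.lt_of_notMem i hw
  fin_cases x <;> fin_cases y <;> simp_all

theorem IsSchedule.apply_rep_blockOf (ht : IsSchedule K t) (w : Fin n × Fin 2) :
    t (blockOf K w).rep = t w := by
  obtain ⟨i, x⟩ := w
  by_cases hi : i ∈ K
  · rw [blockOf_of_mem hi]
    fin_cases x
    · rfl
    · exact ht.eq_of_mem i hi
  · rw [blockOf_of_notMem hi]
    rfl

theorem IsSchedule.eq_iff_blockOf_eq (ht : IsSchedule K t) {w w' : Fin n × Fin 2} :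
    t w = t w' ↔ blockOf K w = blockOf K w' := by
  refine ⟨fun h => ?_, fun h => by rw [← ht.apply_rep_blockOf w, h, ht.apply_rep_blockOf]⟩
  obtain ⟨i, x⟩ := w
  obtain ⟨j, y⟩ := w'
  obtain rfl : i = j := ht.fst_eq h
  by_cases hi : i ∈ K
  · rw [blockOf_of_mem hi, blockOf_of_mem hi]
  · rw [ht.eq_of_notMem hi h]

theorem isSchedule_of_equiv (e : Block K ≃ Icc 1 (2 * n - #K))
    (he : ∀ j, e (.inr (j, 0)) < e (.inr (j, 1))) : IsSchedule K (fun w => e (blockOf K w)) where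
  eq_of_mem i hi := by simp only [blockOf_of_mem hi]
  lt_of_notMem i hi := by
    simp only [blockOf_of_notMem hi]
    exact he ⟨i, hi⟩
  ne_of_fst_ne w w' hne h := by
    rw [← fst_rep_blockOf (K := K) w, ← fst_rep_blockOf (K := K) w',
      e.injective (Subtype.ext h)] at hne
    exact hne rfl
  mem_Icc w := (e (blockOf K w)).2

noncomputable def scheduleEquiv (K : Finset (Fin n)) :
    {e : Block K ≃ Icc 1 (2 * n - #K) // ∀ j, e (.inr (j, 0)) < e (.inr (j, 1))} ≃
      {t // IsSchedule K t} where
  toFun e := ⟨fun w => e.1 (blockOf K w), isSchedule_of_equiv e.1 e.2⟩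
  invFun t :=
    ⟨Equiv.ofBijective (fun b => ⟨t.1 b.rep, t.2.mem_Icc _⟩) <| by
      refine (Fintype.bijective_iff_injective_and_card _).2 ⟨fun b b' h => ?_, by
        rw [card_block, Fintype.card_coe, Nat.card_Icc]
        omega⟩
      rw [← blockOf_rep b, ← blockOf_rep b', ← t.2.eq_iff_blockOf_eq]
      exact congrArg Subtype.val h,
    fun j => t.2.lt_of_notMem j j.2⟩
  left_inv e := by
    ext b
    simp [blockOf_rep]
  right_inv t := by
    ext w
    exact t.2.apply_rep_blockOf w

theorem IsSchedule.exists_eq (ht : IsSchedule K t) {s : ℕ} (hs : s ∈ Icc 1 (2 * n - #K)) :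
    ∃ w, t w = s := by
  let e := ((scheduleEquiv K).symm ⟨t, ht⟩).1
  exact ⟨(e.symm ⟨s, hs⟩).rep, congrArg Subtype.val (e.apply_symm_apply ⟨s, hs⟩)⟩

def outerPart (K : Finset (Fin n)) : Finset (Finset (𝕍 n)) :=
  univ.image (fun w => {some w}) ∪ K.image leg

def stage (t : Fin n × Fin 2 → ℕ) (s : ℕ) : Finset (𝕍 n) :=
  insert none (({w | t w ≤ s} : Finset _).image some)

def level (t : Fin n × Fin 2 → ℕ) (s : ℕ) : Finset (𝕍 n) :=
  ({w | t w = s} : Finset _).image some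

def familyOf (K : Finset (Fin n)) (t : Fin n × Fin 2 → ℕ) : Finset (Finset (𝕍 n)) :=
  outerPart K ∪ (range (2 * n - #K + 1)).image (stage t)

theorem mem_outerPart {U : Finset (𝕍 n)} :
    U ∈ outerPart K ↔ (∃ w, U = {some w}) ∨ ∃ i ∈ K, U = leg i := by
  simp [outerPart, eq_comm]

theorem none_notMem_of_mem_outerPart {U : Finset (𝕍 n)} (hU : U ∈ outerPart K) : none ∉ U := by
  rcases mem_outerPart.1 hU with ⟨w, rfl⟩ | ⟨i, -, rfl⟩ <;> simp

theorem card_outerPart (K : Finset (Fin n)) : #(outerPart K) = 2 * n + #K := by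
  rw [outerPart, card_union_of_disjoint, card_image_of_injective _ fun w w' h =>
    Option.some_injective _ (singleton_injective h), card_image_of_injective _ leg_injective]
  · simp [mul_comm]
  · simp only [disjoint_left, mem_image]
    rintro _ ⟨w, -, rfl⟩ ⟨i, -, h⟩
    simpa [card_leg] using congrArg card h

@[simp] theorem none_mem_stage (s : ℕ) : none ∈ stage t s := mem_insert_self _ _

@[simp] theorem some_mem_stage {s : ℕ} {w : Fin n × Fin 2} : some w ∈ stage t s ↔ t w ≤ s := by
  simp [stage]

@[simp] theorem none_notMem_level (s : ℕ) : none ∉ level t s := by simp [level]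

@[simp] theorem some_mem_level {s : ℕ} {w : Fin n × Fin 2} : some w ∈ level t s ↔ t w = s := by
  simp [level]

theorem stage_mono {s s' : ℕ} (h : s ≤ s') : stage t s ⊆ stage t s' := by
  rintro (_ | w) hw
  · simp
  · simp only [some_mem_stage] at hw ⊢
    omega

theorem stage_eq_union_level {s : ℕ} (hs : 1 ≤ s) : stage t s = stage t (s - 1) ∪ level t s := by
  ext (_ | w)
  · simp
  · simp only [some_mem_stage, mem_union, some_mem_level]
    omega

theorem disjoint_stage_level {s : ℕ} (hs : 1 ≤ s) : Disjoint (stage t (s - 1)) (level t s) := by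
  rw [disjoint_left]
  rintro (_ | w) h₁ h₂
  · simp at h₂
  · simp only [some_mem_stage, some_mem_level] at h₁ h₂
    omega

theorem IsSchedule.stage_zero (ht : IsSchedule K t) : stage t 0 = {none} := by
  ext (_ | w)
  · simp
  · have := ht.one_le_apply w
    simp only [some_mem_stage, mem_singleton, reduceCtorEq, iff_false]
    omega

theorem IsSchedule.stage_top (ht : IsSchedule K t) : stage t (2 * n - #K) = univ := by
  ext (_ | w)
  · simp
  · simpa using ht.apply_le w

theorem IsSchedule.strictMonoOn_stage (ht : IsSchedule K t) :
    StrictMonoOn (stage t) (range (2 * n - #K + 1)) := by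
  intro s _ s' hs' hss'
  simp only [coe_range, Set.mem_Iio] at hs'
  obtain ⟨w, hw⟩ := ht.exists_eq (s := s') (Finset.mem_Icc.2 ⟨by omega, by omega⟩)
  refine (ssubset_iff_of_subset (stage_mono hss'.le)).2 ⟨some w, ?_, ?_⟩ <;>
    simp only [some_mem_stage] <;> omega

theorem mem_familyOf {U : Finset (𝕍 n)} : U ∈ familyOf K t ↔
    (∃ w, U = {some w}) ∨ (∃ i ∈ K, U = leg i) ∨ ∃ s ≤ 2 * n - #K, U = stage t s := by
  simp only [familyOf, mem_union, mem_outerPart, mem_image, mem_range, Nat.lt_succ_iff, or_assoc]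
  simp only [eq_comm]

theorem singleton_some_mem_familyOf (w : Fin n × Fin 2) : {some w} ∈ familyOf K t :=
  mem_familyOf.2 (Or.inl ⟨w, rfl⟩)

theorem leg_mem_familyOf {i : Fin n} (hi : i ∈ K) : leg i ∈ familyOf K t :=
  mem_familyOf.2 (Or.inr (Or.inl ⟨i, hi, rfl⟩))

theorem stage_mem_familyOf {s : ℕ} (hs : s ≤ 2 * n - #K) : stage t s ∈ familyOf K t :=
  mem_familyOf.2 (Or.inr (Or.inr ⟨s, hs, rfl⟩))

theorem IsSchedule.inner_le (ht : IsSchedule K t) (w : Fin n × Fin 2) : t (w.1, 0) ≤ t w := by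
  obtain ⟨i, x⟩ := w
  fin_cases x
  · exact le_rfl
  · by_cases hi : i ∈ K
    · exact (ht.eq_of_mem i hi).le
    · exact (ht.lt_of_notMem i hi).le

theorem IsSchedule.level_mem_familyOf (ht : IsSchedule K t) {s : ℕ}
    (hs : s ∈ Icc 1 (2 * n - #K)) : level t s ∈ familyOf K t := by
  obtain ⟨w, rfl⟩ := ht.exists_eq hs
  by_cases hw : w.1 ∈ K
  · convert leg_mem_familyOf hw using 1
    ext (_ | w')
    · simp
    · rw [some_mem_level, some_mem_leg, ht.eq_iff_blockOf_eq]
      refine ⟨fun h => ?_, fun h => ?_⟩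
      · simpa [fst_rep_blockOf] using congrArg (fun b => b.rep.1) h
      · simp [blockOf, h, hw]
  · convert singleton_some_mem_familyOf w using 1
    ext (_ | w')
    · simp
    · simp only [some_mem_level, mem_singleton, Option.some_inj]
      exact ⟨fun h => (ht.eq_of_notMem hw h.symm).symm, fun h => h ▸ rfl⟩

theorem IsSchedule.exists_adj_stage_level (ht : IsSchedule K t) {s : ℕ}
    (hs : s ∈ Icc 1 (2 * n - #K)) :
    ∃ a ∈ stage t (s - 1), ∃ b ∈ level t s, (spiderGraph n).Adj a b := by
  obtain ⟨⟨i, x⟩, rfl⟩ := ht.exists_eq hs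
  have hle : t (i, 0) ≤ t (i, x) := ht.inner_le (i, x)
  rcases hle.eq_or_lt with heq | hlt
  · exact ⟨none, by simp, some (i, 0), some_mem_level.2 heq, adj_none_inner i⟩
  · obtain rfl : x = 1 := by
      fin_cases x
      · exact absurd hlt (lt_irrefl _)
      · rfl
    refine ⟨some (i, 0), ?_, some (i, 1), some_mem_level.2 rfl, adj_inner_outer i⟩
    simp only [some_mem_stage]
    omega

theorem IsSchedule.leg_subset_or_disjoint_stage (ht : IsSchedule K t) {i : Fin n} (hi : i ∈ K)
    (s : ℕ) : leg i ⊆ stage t s ∨ Disjoint (leg i) (stage t s) := by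
  have heq := ht.eq_of_mem i hi
  by_cases h : t (i, 0) ≤ s
  · left
    intro v hv
    simp only [leg, mem_insert, mem_singleton] at hv
    rcases hv with rfl | rfl <;> simp only [some_mem_stage] <;> omega
  · right
    rw [disjoint_left]
    intro v hv
    simp only [leg, mem_insert, mem_singleton] at hv
    rcases hv with rfl | rfl <;> simp only [some_mem_stage] <;> omega

theorem IsSchedule.laminar_familyOf (ht : IsSchedule K t) :
    ∀ U₁ ∈ familyOf K t, ∀ U₂ ∈ familyOf K t, U₁ ⊆ U₂ ∨ U₂ ⊆ U₁ ∨ Disjoint U₁ U₂ := by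
  have hsymm {A B : Finset (𝕍 n)} (h : A ⊆ B ∨ B ⊆ A ∨ Disjoint A B) :
      B ⊆ A ∨ A ⊆ B ∨ Disjoint B A := by
    rw [disjoint_comm]
    tauto
  have hleg : ∀ i ∈ K, ∀ U ∈ familyOf K t, leg i ⊆ U ∨ U ⊆ leg i ∨ Disjoint (leg i) U := by
    intro i hi U hU
    rcases mem_familyOf.1 hU with ⟨w, rfl⟩ | ⟨j, -, rfl⟩ | ⟨s, -, rfl⟩
    · exact hsymm (laminar_singleton _ _)
    · rcases eq_or_ne i j with rfl | hij
      · exact Or.inl subset_rfl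
      · exact Or.inr (Or.inr (disjoint_leg hij))
    · exact (ht.leg_subset_or_disjoint_stage hi s).imp_right Or.inr
  intro U₁ h₁ U₂ h₂
  rcases mem_familyOf.1 h₁ with ⟨w, rfl⟩ | ⟨i, hi, rfl⟩ | ⟨s, -, rfl⟩
  · exact laminar_singleton _ _
  · exact hleg i hi U₂ h₂
  rcases mem_familyOf.1 h₂ with ⟨w, rfl⟩ | ⟨j, hj, rfl⟩ | ⟨s', -, rfl⟩
  · exact hsymm (laminar_singleton _ _)
  · exact hsymm (hleg j hj _ h₁)
  · exact (le_total s s').imp stage_mono fun h => Or.inl (stage_mono h)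

theorem IsSchedule.exists_split_of_mem_familyOf (ht : IsSchedule K t) {U : Finset (𝕍 n)}
    (hU : U ∈ familyOf K t) (hcard : 2 ≤ #U) :
    ∃ A ∈ familyOf K t, ∃ B ∈ familyOf K t, Disjoint A B ∧ A ∪ B = U ∧
      ∃ a ∈ A, ∃ b ∈ B, (spiderGraph n).Adj a b := by
  rcases mem_familyOf.1 hU with ⟨w, rfl⟩ | ⟨i, hi, rfl⟩ | ⟨s, hs, rfl⟩
  · simp at hcard
  · exact ⟨_, singleton_some_mem_familyOf (i, 0), _, singleton_some_mem_familyOf (i, 1),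
      by simp, by rw [leg, insert_eq], _, mem_singleton_self _, _, mem_singleton_self _,
      adj_inner_outer i⟩
  · have hs₁ : 1 ≤ s := by
      by_contra h
      rw [show s = 0 by omega, ht.stage_zero] at hcard
      simp at hcard
    obtain ⟨a, ha, b, hb, hab⟩ := ht.exists_adj_stage_level (Finset.mem_Icc.2 ⟨hs₁, hs⟩)
    exact ⟨_, stage_mem_familyOf (by omega), _,
      ht.level_mem_familyOf (Finset.mem_Icc.2 ⟨hs₁, hs⟩), disjoint_stage_level hs₁,
      (stage_eq_union_level hs₁).symm, a, ha, b, hb, hab⟩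

theorem card_vertex : Fintype.card (𝕍 n) = 2 * n + 1 := by
  simp only [Fintype.card_option, Fintype.card_prod, Fintype.card_fin]
  ring

theorem IsSchedule.card_familyOf (ht : IsSchedule K t) : #(familyOf K t) = 4 * n + 1 := by
  have hK : #K ≤ n := by simpa using card_le_univ K
  rw [familyOf, card_union_of_disjoint, card_outerPart,
    card_image_of_injOn ht.strictMonoOn_stage.injOn, card_range]
  · omega
  · rw [disjoint_left]
    intro U hU hU'
    obtain ⟨s, -, rfl⟩ := mem_image.1 hU'
    exact none_notMem_of_mem_outerPart hU (none_mem_stage s)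

theorem IsSchedule.isAssemblyFamily_familyOf (ht : IsSchedule K t) :
    IsAssemblyFamily (spiderGraph n) (familyOf K t) := by
  refine ⟨?_, ht.stage_top ▸ stage_mem_familyOf le_rfl, ?_, ht.laminar_familyOf,
    fun U hU hcard => ht.exists_split_of_mem_familyOf hU hcard, ?_⟩
  · rintro (_ | w)
    · exact ht.stage_zero ▸ stage_mem_familyOf (Nat.zero_le _)
    · exact singleton_some_mem_familyOf w
  · intro U hU
    rcases mem_familyOf.1 hU with ⟨w, rfl⟩ | ⟨i, -, rfl⟩ | ⟨s, -, rfl⟩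
    · exact singleton_nonempty _
    · exact ⟨some (i, 0), by simp⟩
    · exact ⟨none, none_mem_stage s⟩
  · rw [ht.card_familyOf, card_vertex]
    omega

def central (F : Finset (Finset (𝕍 n))) : Finset (Finset (𝕍 n)) := {U ∈ F | none ∈ U}

def timeOf (F : Finset (Finset (𝕍 n))) (w : Fin n × Fin 2) : ℕ := #{U ∈ central F | some w ∉ U}

def legsOf (F : Finset (Finset (𝕍 n))) : Finset (Fin n) := {i | leg i ∈ F}

theorem mem_legsOf {F : Finset (Finset (𝕍 n))} {i : Fin n} : i ∈ legsOf F ↔ leg i ∈ F := by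
  simp [legsOf]

theorem legsOf_familyOf : legsOf (familyOf K t) = K := by
  ext i
  refine ⟨fun h => ?_, fun h => mem_legsOf.2 (leg_mem_familyOf h)⟩
  rcases mem_familyOf.1 (mem_legsOf.1 h) with ⟨w, hw⟩ | ⟨j, hj, hij⟩ | ⟨s, -, hs⟩
  · simpa [card_leg] using congrArg card hw
  · exact leg_injective hij ▸ hj
  · exact absurd (hs ▸ none_mem_stage s) (none_notMem_leg i)

theorem central_familyOf :
    central (familyOf K t) = (range (2 * n - #K + 1)).image (stage t) := by
  rw [central, familyOf, filter_union,
    filter_false_of_mem fun U hU => none_notMem_of_mem_outerPart hU,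
    filter_true_of_mem fun U hU => by obtain ⟨s, -, rfl⟩ := mem_image.1 hU; exact none_mem_stage s,
    empty_union]

theorem IsSchedule.timeOf_familyOf (ht : IsSchedule K t) : timeOf (familyOf K t) = t := by
  funext w
  have hfilter : {s ∈ range (2 * n - #K + 1) | some w ∉ stage t s} = range (t w) := by
    ext s
    simp only [mem_filter, mem_range, some_mem_stage, not_le]
    have := ht.apply_le w
    omega
  rw [timeOf, central_familyOf, filter_image, card_image_of_injOn
    (ht.strictMonoOn_stage.injOn.mono (coe_subset.2 (filter_subset _ _))), hfilter, card_range]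

variable {F : Finset (Finset (𝕍 n))} {U : Finset (𝕍 n)}

theorem isPiece_of_mem (hF : IsAssemblyFamily (spiderGraph n) F) (hU : U ∈ F) : IsPiece U :=
  hF.induction_on isPiece_singleton
    (fun _ _ _ _ hAB ha hb hab hA hB => isPiece_union hA hB hAB ha hb hab) U hU

theorem inner_mem_of_outer_mem (hF : IsAssemblyFamily (spiderGraph n) F) (hU : U ∈ central F)
    {i : Fin n} (h : some (i, 1) ∈ U) : some (i, 0) ∈ U := by
  obtain ⟨hUF, hnU⟩ := mem_filter.1 hU
  rcases isPiece_of_mem hF hUF with hclosed | ⟨j, hUj⟩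
  · exact hclosed.2 i h
  · exact absurd (hUj hnU) (none_notMem_leg j)

theorem eq_leg_of_two_le_card (hF : IsAssemblyFamily (spiderGraph n) F) (hU : U ∈ F)
    (hnU : none ∉ U) (hcard : 2 ≤ #U) : ∃ i, U = leg i := by
  obtain ⟨i, hUi⟩ := (isPiece_of_mem hF hU).resolve_left fun h => hnU h.1
  exact ⟨i, eq_of_subset_of_card_le hUi (by rwa [card_leg])⟩

theorem filter_none_notMem_eq_outerPart (hF : IsAssemblyFamily (spiderGraph n) F) :
    {U ∈ F | none ∉ U} = outerPart (legsOf F) := by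
  ext U
  rw [mem_filter, mem_outerPart]
  constructor
  · rintro ⟨hU, hnU⟩
    by_cases hcard : 2 ≤ #U
    · obtain ⟨i, rfl⟩ := eq_leg_of_two_le_card hF hU hnU hcard
      exact Or.inr ⟨i, mem_legsOf.2 hU, rfl⟩
    · obtain ⟨v, hv⟩ := hF.2.2.1 U hU
      obtain ⟨_ | w, rfl⟩ := card_eq_one.1 (show #U = 1 by have := card_pos.2 ⟨v, hv⟩; omega)
      · simp at hnU
      · exact Or.inl ⟨w, rfl⟩
  · rintro (⟨w, rfl⟩ | ⟨i, hi, rfl⟩)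
    · exact ⟨hF.1 _, by simp⟩
    · exact ⟨mem_legsOf.1 hi, none_notMem_leg i⟩

theorem card_central (hF : IsAssemblyFamily (spiderGraph n) F) :
    #(central F) = 2 * n - #(legsOf F) + 1 := by
  have h := card_filter_add_card_filter_not (s := F) (fun U => none ∈ U)
  rw [filter_none_notMem_eq_outerPart hF, card_outerPart, hF.2.2.2.2.2, card_vertex] at h
  have hK : #(legsOf F) ≤ n := by simpa using card_le_univ (legsOf F)
  rw [central]
  omega

theorem some_mem_iff_timeOf_le (hF : IsAssemblyFamily (spiderGraph n) F) (hU : U ∈ central F)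
    (w : Fin n × Fin 2) : some w ∈ U ↔ timeOf F w ≤ #{U' ∈ central F | U' ⊂ U} :=
  (hF.isChain_filter_mem none).mem_iff_card_filter_notMem_le hU (some w)

theorem univ_mem_central (hF : IsAssemblyFamily (spiderGraph n) F) : univ ∈ central F :=
  mem_filter.2 ⟨hF.2.1, mem_univ _⟩

-- Two vertices with the same time lie in the same part of the split of the smallest central
-- member containing them; that part does not contain the centre, so it is a leg.
theorem fst_eq_and_mem_legsOf_of_timeOf_eq (hF : IsAssemblyFamily (spiderGraph n) F)
    {w w' : Fin n × Fin 2} (hne : w ≠ w') (h : timeOf F w = timeOf F w') :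
    w.1 = w'.1 ∧ w.1 ∈ legsOf F := by
  have hiff : ∀ U ∈ central F, some w ∈ U ↔ some w' ∈ U := fun U hU => by
    rw [some_mem_iff_timeOf_le hF hU, some_mem_iff_timeOf_le hF hU, h]
  obtain ⟨U, hU, hmin⟩ := exists_min_image {U ∈ central F | some w ∈ U} card
    ⟨univ, mem_filter.2 ⟨univ_mem_central hF, mem_univ _⟩⟩
  obtain ⟨hUc, hwU⟩ := mem_filter.1 hU
  obtain ⟨hUF, hnU⟩ := mem_filter.1 hUc
  have hcard : 2 ≤ #U := by
    have := card_le_card (insert_subset hnU (singleton_subset_iff.2 hwU))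
    rwa [card_pair (by simp)] at this
  obtain ⟨A, hA, B, hB, hnA, hAU, hAB, rfl⟩ := hF.exists_split_of_mem hUF hcard hnU
  have hAc : A ∈ central F := mem_filter.2 ⟨hA, hnA⟩
  have hwA : some w ∉ A := fun hwA =>
    (card_lt_card hAU).not_ge (hmin A (mem_filter.2 ⟨hAc, hwA⟩))
  have hwB : some w ∈ B := (mem_union.1 hwU).resolve_left hwA
  have hw'B : some w' ∈ B :=
    (mem_union.1 ((hiff _ hUc).1 hwU)).resolve_left fun h => hwA ((hiff A hAc).2 h)
  have hcardB : 2 ≤ #B := by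
    have := card_le_card (insert_subset hwB (singleton_subset_iff.2 hw'B))
    rwa [card_pair (by simpa using hne)] at this
  obtain ⟨i, rfl⟩ := eq_leg_of_two_le_card hF hB (disjoint_left.1 hAB hnA) hcardB
  rw [some_mem_leg] at hwB hw'B
  exact ⟨hwB.trans hw'B.symm, hwB ▸ mem_legsOf.2 hB⟩

theorem isSchedule_timeOf (hF : IsAssemblyFamily (spiderGraph n) F) :
    IsSchedule (legsOf F) (timeOf F) where
  eq_of_mem i hi := by
    refine congrArg card (filter_congr fun U hU => not_congr ?_)
    obtain ⟨hUF, hnU⟩ := mem_filter.1 hU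
    rcases hF.2.2.2.1 _ (mem_legsOf.1 hi) U hUF with hsub | hsub | hdisj
    · exact iff_of_true (hsub (by simp [leg])) (hsub (by simp [leg]))
    · exact absurd (hsub hnU) (none_notMem_leg i)
    · exact iff_of_false (disjoint_left.1 hdisj (by simp [leg]))
        (disjoint_left.1 hdisj (by simp [leg]))
  lt_of_notMem i hi := by
    refine lt_of_le_of_ne (card_le_card fun U hU => ?_) fun h => ?_
    · rw [mem_filter] at hU ⊢
      exact ⟨hU.1, fun h => hU.2 (inner_mem_of_outer_mem hF hU.1 h)⟩
    · exact hi (fst_eq_and_mem_legsOf_of_timeOf_eq hF (by simp) h).2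
  ne_of_fst_ne w w' hne h :=
    hne (fst_eq_and_mem_legsOf_of_timeOf_eq hF (by rintro rfl; exact hne rfl) h).1
  mem_Icc w := by
    rw [Finset.mem_Icc]
    constructor
    · have hnone : {none} ∈ central F := mem_filter.2 ⟨hF.1 none, mem_singleton_self _⟩
      exact card_pos.2 ⟨{none}, mem_filter.2 ⟨hnone, by simp⟩⟩
    · have hsub : {U ∈ central F | some w ∉ U} ⊆ (central F).erase univ := fun U hU => by
        rw [mem_filter] at hU
        exact mem_erase.2 ⟨by rintro rfl; exact hU.2 (mem_univ _), hU.1⟩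
      have := card_le_card hsub
      rw [card_erase_of_mem (univ_mem_central hF), card_central hF] at this
      exact this

theorem familyOf_legsOf_timeOf (hF : IsAssemblyFamily (spiderGraph n) F) :
    familyOf (legsOf F) (timeOf F) = F := by
  refine (eq_of_subset_of_card_le (fun U hU => ?_) ?_).symm
  · by_cases hnU : none ∈ U
    · have hUc : U ∈ central F := mem_filter.2 ⟨hU, hnU⟩
      have hrank : #{U' ∈ central F | U' ⊂ U} ≤ 2 * n - #(legsOf F) := by
        have := card_le_card fun U' (hU' : U' ∈ {U' ∈ central F | U' ⊂ U}) =>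
          mem_erase.2 ⟨(mem_filter.1 hU').2.ne, (mem_filter.1 hU').1⟩
        rwa [card_erase_of_mem hUc, card_central hF, Nat.add_sub_cancel] at this
      convert stage_mem_familyOf hrank using 1
      ext (_ | w)
      · simpa using hnU
      · rw [some_mem_stage]
        exact some_mem_iff_timeOf_le hF hUc w
    · refine mem_union_left _ ?_
      rw [← filter_none_notMem_eq_outerPart hF]
      exact mem_filter.2 ⟨hU, hnU⟩
  · rw [(isSchedule_timeOf hF).card_familyOf, hF.2.2.2.2.2, card_vertex]
    omega

noncomputable def assemblyFamilyEquiv (n : ℕ) :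
    {F // IsAssemblyFamily (spiderGraph n) F} ≃ Σ K : Finset (Fin n), {t // IsSchedule K t} where
  toFun F := ⟨legsOf F.1, timeOf F.1, isSchedule_timeOf F.2⟩
  invFun p := ⟨familyOf p.1 p.2.1, p.2.2.isAssemblyFamily_familyOf⟩
  left_inv F := Subtype.ext (familyOf_legsOf_timeOf F.2)
  right_inv p := Sigma.subtype_ext legsOf_familyOf p.2.2.timeOf_familyOf

instance (K : Finset (Fin n)) : Finite {t // IsSchedule K t} :=
  Finite.of_equiv _ (scheduleEquiv K)

theorem card_schedule_mul_two_pow (K : Finset (Fin n)) :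
    Nat.card {t // IsSchedule K t} * 2 ^ (n - #K) = (2 * n - #K).factorial := by
  have h := card_increasing_equiv_mul_two_pow (α := {i // i ∈ K}) (γ := {i // i ∉ K})
    (β := Icc 1 (2 * n - #K)) (by rw [card_block, Fintype.card_coe, Nat.card_Icc]; omega)
  rwa [Nat.card_congr (scheduleEquiv K), Fintype.card_coe, Nat.card_Icc, Nat.add_sub_cancel,
    Fintype.card_subtype_compl, Fintype.card_coe, Fintype.card_fin] at h

end Spider

/-- The number of assembly trees of the spider `S²ₙ` is
`∑ₖ C(n,k) (2n-k)! / 2^(n-k)`. -/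
theorem assemblyTreeCount_spider (n : ℕ) :
    (assemblyTreeCount (spiderGraph n) : ℚ) =
      ∑ k ∈ Finset.range (n + 1),
        (n.choose k : ℚ) * (2 * n - k).factorial / 2 ^ (n - k) := by
  have hcount : assemblyTreeCount (spiderGraph n) =
      ∑ K : Finset (Fin n), Nat.card {t // Spider.IsSchedule K t} := by
    rw [assemblyTreeCount, Nat.card_congr (Spider.assemblyFamilyEquiv n), Nat.card_sigma]
  have hterm (K : Finset (Fin n)) :
      (Nat.card {t // Spider.IsSchedule K t} : ℚ) = (2 * n - #K).factorial / 2 ^ (n - #K) := by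
    rw [eq_div_iff (by positivity)]
    exact_mod_cast Spider.card_schedule_mul_two_pow K
  rw [hcount, Nat.cast_sum, ← powerset_univ, sum_congr rfl fun K _ => hterm K,
    sum_powerset_apply_card (fun k => ((2 * n - k).factorial : ℚ) / 2 ^ (n - k)), card_univ,
    Fintype.card_fin]
  simp only [nsmul_eq_mul, mul_div_assoc]
end

section
/- The number of assembly trees of the path $P_n$ on $n$ vertices (using the edge gluing rule) is the Catalan number $\frac{1}{n}\binom{2n-2}{n-1}$. -/
/-!
Every label of an assembly tree of `Pₙ` is a set of consecutive vertices: singletons are, and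
two disjoint intervals joined by an edge of the path are adjacent, so their union is again an
interval. An assembly tree is therefore determined by its shape, a binary tree whose leaves are
the vertices `0, …, n - 1` from left to right, and every binary tree with `n` leaves arises.
Binary trees with `n` leaves are counted by `catalan (n - 1)`.
-/

open Finset

def finIco (n a b : ℕ) : Finset (Fin n) := univ.filter fun i ↦ a ≤ (i : ℕ) ∧ (i : ℕ) < b

def IsLaminar {α : Type*} (F : Finset (Finset α)) : Prop :=
  ∀ U₁ ∈ F, ∀ U₂ ∈ F, U₁ ⊆ U₂ ∨ U₂ ⊆ U₁ ∨ Disjoint U₁ U₂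

section finIco

variable {n a b c d : ℕ}

@[simp] lemma mem_finIco {i : Fin n} : i ∈ finIco n a b ↔ a ≤ i ∧ (i : ℕ) < b := by
  simp [finIco]

lemma finIco_nonempty (hab : a < b) (hb : b ≤ n) : (finIco n a b).Nonempty :=
  ⟨⟨a, by omega⟩, by simpa using hab⟩

lemma finIco_subset_finIco (hca : c ≤ a) (hbd : b ≤ d) : finIco n a b ⊆ finIco n c d := by
  intro i; simp only [mem_finIco]; omega

lemma disjoint_finIco (hbc : b ≤ c) : Disjoint (finIco n a b) (finIco n c d) := by
  rw [disjoint_left]; intro i; simp only [mem_finIco]; omega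

lemma finIco_union_finIco (hab : a ≤ b) (hbc : b ≤ c) :
    finIco n a b ∪ finIco n b c = finIco n a c := by
  ext i; simp only [mem_union, mem_finIco]; omega

lemma finIco_univ : finIco n 0 n = univ := by
  ext i; simp

lemma singleton_eq_finIco (v : Fin n) : {v} = finIco n v (v + 1) := by
  ext i; simp only [mem_singleton, mem_finIco, ← Fin.val_inj]; omega

lemma card_finIco (hb : b ≤ n) : #(finIco n a b) = b - a := by
  rw [← Nat.card_Ico, ← card_image_of_injective _ Fin.val_injective]
  congr 1
  ext x
  simp only [mem_image, mem_finIco, mem_Ico]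
  exact ⟨by rintro ⟨i, hi, rfl⟩; exact hi, fun hx ↦ ⟨⟨x, by omega⟩, hx, rfl⟩⟩

lemma finIco_inj (hab : a < b) (hb : b ≤ n) (hcd : c < d) (hd : d ≤ n)
    (h : finIco n a b = finIco n c d) : a = c ∧ b = d := by
  have hmem : ∀ i : Fin n, (a ≤ i ∧ (i : ℕ) < b ↔ c ≤ i ∧ (i : ℕ) < d) := fun i ↦
    by simpa using congrArg (i ∈ ·) h
  have h₁ := hmem ⟨a, by omega⟩
  have h₂ := hmem ⟨c, by omega⟩
  have h₃ := hmem ⟨b - 1, by omega⟩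
  have h₄ := hmem ⟨d - 1, by omega⟩
  simp only at h₁ h₂ h₃ h₄
  omega

lemma eq_or_eq_of_adj_of_disjoint
    (hdisj : Disjoint (finIco n a b) (finIco n c d)) {v w : Fin n}
    (hv : v ∈ finIco n a b) (hw : w ∈ finIco n c d) (hvw : (SimpleGraph.pathGraph n).Adj v w) :
    b = c ∨ d = a := by
  simp only [mem_finIco] at hv hw
  have hsep : b ≤ c ∨ d ≤ a := by
    by_contra! hcross
    have hi : (⟨max a c, by omega⟩ : Fin n) ∈ finIco n a b ∩ finIco n c d := by
      simp only [mem_inter, mem_finIco]; omega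
    simp [disjoint_iff_inter_eq_empty.mp hdisj] at hi
  rw [SimpleGraph.pathGraph_adj] at hvw
  omega

lemma IsLaminar.le_of_finIco_mem {F : Finset (Finset (Fin n))} (hF : IsLaminar F)
    (hac : a < c) (hbd : b < d) (hd : d ≤ n)
    (hab : finIco n a b ∈ F) (hcd : finIco n c d ∈ F) :
    b ≤ c := by
  by_contra! hcb
  have ha : (⟨a, by omega⟩ : Fin n) ∈ finIco n a b := by simp only [mem_finIco]; omega
  have hc : (⟨c, by omega⟩ : Fin n) ∈ finIco n a b ∩ finIco n c d := by
    simp only [mem_inter, mem_finIco]; omega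
  have hd' : (⟨d - 1, by omega⟩ : Fin n) ∈ finIco n c d := by simp only [mem_finIco]; omega
  rcases hF _ hab _ hcd with h | h | h
  · have := h ha; simp only [mem_finIco] at this; omega
  · have := h hd'; simp only [mem_finIco] at this; omega
  · simp [disjoint_iff_inter_eq_empty.mp h] at hc

end finIco

/-- The node labels of the binary tree `t` whose leaves, read from left to right, are the
vertices `a, a + 1, …` of the path. -/
def intervalFamily (n : ℕ) : ℕ → BinaryTree Unit → Finset (Finset (Fin n))
  | a, .nil => {finIco n a (a + 1)}
  | a, .node _ l r =>
      insert (finIco n a (a + (l.numLeaves + r.numLeaves)))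
        (intervalFamily n a l ∪ intervalFamily n (a + l.numLeaves) r)

section intervalFamily

variable {n : ℕ}

lemma finIco_mem_intervalFamily (a : ℕ) (t : BinaryTree Unit) :
    finIco n a (a + t.numLeaves) ∈ intervalFamily n a t := by
  cases t <;> simp [intervalFamily]

lemma intervalFamily_subset_node (a : ℕ) (x : Unit) (l r : BinaryTree Unit) :
    intervalFamily n a l ⊆ intervalFamily n a (.node x l r) ∧
      intervalFamily n (a + l.numLeaves) r ⊆ intervalFamily n a (.node x l r) := by
  simp only [intervalFamily]
  exact ⟨subset_union_left.trans (subset_insert _ _),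
    subset_union_right.trans (subset_insert _ _)⟩

lemma exists_eq_finIco_of_mem_intervalFamily {a : ℕ} {t : BinaryTree Unit} {U : Finset (Fin n)}
    (hU : U ∈ intervalFamily n a t) :
    ∃ c d, a ≤ c ∧ c < d ∧ d ≤ a + t.numLeaves ∧ U = finIco n c d := by
  induction t generalizing a with
  | nil =>
    rw [intervalFamily, mem_singleton] at hU
    exact ⟨a, a + 1, le_rfl, by omega, by simp, hU⟩
  | node _ l r ihl ihr =>
    simp only [intervalFamily, mem_insert, mem_union] at hU
    rcases hU with rfl | hU | hU
    · exact ⟨a, _, le_rfl, by have := l.numLeaves_pos; omega, by simp, rfl⟩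
    · obtain ⟨c, d, hac, hcd, hd, rfl⟩ := ihl hU
      exact ⟨c, d, hac, hcd, by simp only [BinaryTree.numLeaves]; omega, rfl⟩
    · obtain ⟨c, d, hac, hcd, hd, rfl⟩ := ihr hU
      exact ⟨c, d, by omega, hcd, by simp only [BinaryTree.numLeaves]; omega, rfl⟩

lemma subset_finIco_of_mem_intervalFamily {a : ℕ} {t : BinaryTree Unit} {U : Finset (Fin n)}
    (hU : U ∈ intervalFamily n a t) : U ⊆ finIco n a (a + t.numLeaves) := by
  obtain ⟨c, d, hac, -, hd, rfl⟩ := exists_eq_finIco_of_mem_intervalFamily hU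
  exact finIco_subset_finIco hac hd

lemma singleton_mem_intervalFamily {a : ℕ} {t : BinaryTree Unit} {v : Fin n}
    (hav : a ≤ v) (hv : v < a + t.numLeaves) : {v} ∈ intervalFamily n a t := by
  induction t generalizing a with
  | nil =>
    obtain rfl : a = v := by simp only [BinaryTree.numLeaves] at hv; omega
    simp [intervalFamily, singleton_eq_finIco]
  | node _ l r ihl ihr =>
    simp only [intervalFamily, mem_insert, mem_union]
    rcases Nat.lt_or_ge v (a + l.numLeaves) with h | h
    · exact .inr (.inl (ihl hav h))
    · exact .inr (.inr (ihr h (by simp only [BinaryTree.numLeaves] at hv; omega)))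

lemma nonempty_of_mem_intervalFamily {a : ℕ} {t : BinaryTree Unit} {U : Finset (Fin n)}
    (ht : a + t.numLeaves ≤ n) (hU : U ∈ intervalFamily n a t) : U.Nonempty := by
  obtain ⟨c, d, -, hcd, hd, rfl⟩ := exists_eq_finIco_of_mem_intervalFamily hU
  exact finIco_nonempty hcd (by omega)

lemma card_intervalFamily {a : ℕ} {t : BinaryTree Unit} (ht : a + t.numLeaves ≤ n) :
    #(intervalFamily n a t) = 2 * t.numLeaves - 1 := by
  induction t generalizing a with
  | nil => simp [intervalFamily]
  | node _ l r ihl ihr =>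
    simp only [BinaryTree.numLeaves] at ht ⊢
    have hl := l.numLeaves_pos
    have hr := r.numLeaves_pos
    have hdisj : Disjoint (intervalFamily n a l) (intervalFamily n (a + l.numLeaves) r) := by
      rw [disjoint_left]
      intro U hUl hUr
      obtain ⟨x, hx⟩ := nonempty_of_mem_intervalFamily (by omega) hUl
      exact disjoint_left.1 (disjoint_finIco le_rfl) (subset_finIco_of_mem_intervalFamily hUl hx)
        (subset_finIco_of_mem_intervalFamily hUr hx)
    have hroot : finIco n a (a + (l.numLeaves + r.numLeaves)) ∉
        intervalFamily n a l ∪ intervalFamily n (a + l.numLeaves) r := by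
      rw [mem_union, not_or]
      constructor <;> intro h <;> have hsub := subset_finIco_of_mem_intervalFamily h
      · have := hsub (mem_finIco (i := ⟨a + l.numLeaves, by omega⟩).2 (by simp only; omega))
        simp only [mem_finIco] at this; omega
      · have := hsub (mem_finIco (i := ⟨a, by omega⟩).2 (by simp only; omega))
        simp only [mem_finIco] at this; omega
    rw [intervalFamily, card_insert_of_notMem hroot, card_union_of_disjoint hdisj,
      ihl (by omega), ihr (by omega)]
    omega

lemma isLaminar_intervalFamily (a : ℕ) (t : BinaryTree Unit) :
    IsLaminar (intervalFamily n a t) := by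
  induction t generalizing a with
  | nil =>
    intro U₁ h₁ U₂ h₂
    rw [intervalFamily, mem_singleton] at h₁ h₂
    exact .inl (h₁.trans h₂.symm).subset
  | node x l r ihl ihr =>
    have hlr : ∀ U₁ ∈ intervalFamily n a l, ∀ U₂ ∈ intervalFamily n (a + l.numLeaves) r,
        Disjoint U₁ U₂ := fun U₁ h₁ U₂ h₂ =>
      (disjoint_finIco le_rfl).mono (subset_finIco_of_mem_intervalFamily h₁)
        (subset_finIco_of_mem_intervalFamily h₂)
    intro U₁ h₁ U₂ h₂
    have h₁root := subset_finIco_of_mem_intervalFamily h₁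
    have h₂root := subset_finIco_of_mem_intervalFamily h₂
    simp only [intervalFamily, mem_insert, mem_union] at h₁ h₂
    rcases h₁ with rfl | h₁ | h₁
    · exact .inr (.inl h₂root)
    rcases h₂ with rfl | h₂ | h₂
    · exact .inl h₁root
    · exact ihl a U₁ h₁ U₂ h₂
    · exact .inr (.inr (hlr U₁ h₁ U₂ h₂))
    rcases h₂ with rfl | h₂ | h₂
    · exact .inl h₁root
    · exact .inr (.inr (hlr U₂ h₂ U₁ h₁).symm)
    · exact ihr _ U₁ h₁ U₂ h₂

lemma exists_split_of_mem_intervalFamily {a : ℕ} {t : BinaryTree Unit}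
    (ht : a + t.numLeaves ≤ n) {U : Finset (Fin n)} (hU : U ∈ intervalFamily n a t)
    (hcard : 2 ≤ #U) :
    ∃ U₁ ∈ intervalFamily n a t, ∃ U₂ ∈ intervalFamily n a t,
      Disjoint U₁ U₂ ∧ U₁ ∪ U₂ = U ∧
      ∃ v₁ ∈ U₁, ∃ v₂ ∈ U₂, (SimpleGraph.pathGraph n).Adj v₁ v₂ := by
  induction t generalizing a with
  | nil =>
    rw [intervalFamily, mem_singleton] at hU
    rw [hU, card_finIco (by simpa using ht)] at hcard
    omega
  | node x l r ihl ihr =>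
    simp only [BinaryTree.numLeaves] at ht
    have hl := l.numLeaves_pos
    have hr := r.numLeaves_pos
    obtain ⟨hsubl, hsubr⟩ := intervalFamily_subset_node (n := n) a x l r
    have hU' := hU
    simp only [intervalFamily, mem_insert, mem_union] at hU'
    rcases hU' with rfl | hUl | hUr
    · refine ⟨_, hsubl (finIco_mem_intervalFamily a l), _, hsubr (finIco_mem_intervalFamily _ r),
        disjoint_finIco le_rfl, by rw [finIco_union_finIco (by omega) (by omega), add_assoc], ?_⟩
      refine ⟨⟨a + l.numLeaves - 1, by omega⟩, by simp only [mem_finIco]; omega,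
        ⟨a + l.numLeaves, by omega⟩, by simp only [mem_finIco]; omega, ?_⟩
      rw [SimpleGraph.pathGraph_adj]
      simp only
      omega
    · obtain ⟨U₁, h₁, U₂, h₂, hsplit⟩ := ihl (by omega) hUl
      exact ⟨U₁, hsubl h₁, U₂, hsubl h₂, hsplit⟩
    · obtain ⟨U₁, h₁, U₂, h₂, hsplit⟩ := ihr (by omega) hUr
      exact ⟨U₁, hsubr h₁, U₂, hsubr h₂, hsplit⟩

lemma isAssemblyFamily_intervalFamily {t : BinaryTree Unit} (ht : t.numLeaves = n) :
    IsAssemblyFamily (SimpleGraph.pathGraph n) (intervalFamily n 0 t) := by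
  have ht' : 0 + t.numLeaves ≤ n := by omega
  refine ⟨fun v ↦ singleton_mem_intervalFamily (Nat.zero_le _) (by omega), ?_,
    fun U hU ↦ nonempty_of_mem_intervalFamily ht' hU, isLaminar_intervalFamily 0 t,
    fun U hU ↦ exists_split_of_mem_intervalFamily ht' hU, ?_⟩
  · simpa [ht, finIco_univ] using finIco_mem_intervalFamily (n := n) 0 t
  · rw [card_intervalFamily ht', ht, Fintype.card_fin]

lemma eq_of_intervalFamily_subset {F : Finset (Finset (Fin n))} (hF : IsLaminar F) {a : ℕ}
    {t t' : BinaryTree Unit} (ht : a + t.numLeaves ≤ n) (htt' : t.numLeaves = t'.numLeaves)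
    (hsub : intervalFamily n a t ⊆ F) (hsub' : intervalFamily n a t' ⊆ F) : t = t' := by
  induction t generalizing a t' with
  | nil =>
    cases t' with
    | nil => rfl
    | node _ l r =>
      have := l.numLeaves_pos; have := r.numLeaves_pos
      simp only [BinaryTree.numLeaves] at htt'; omega
  | node x l r ihl ihr =>
    cases t' with
    | nil =>
      have := l.numLeaves_pos; have := r.numLeaves_pos
      simp only [BinaryTree.numLeaves] at htt'; omega
    | node x' l' r' =>
      simp only [BinaryTree.numLeaves] at ht htt'
      have := l.numLeaves_pos; have := r.numLeaves_pos
      have := l'.numLeaves_pos; have := r'.numLeaves_pos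
      obtain ⟨hl, hr⟩ := intervalFamily_subset_node (n := n) a x l r
      obtain ⟨hl', hr'⟩ := intervalFamily_subset_node (n := n) a x' l' r'
      have hmem := fun {a} t ↦ finIco_mem_intervalFamily (n := n) a t
      -- two different cuts of the root interval would give crossing members of `F`
      have hsplit : l.numLeaves = l'.numLeaves := by
        have h₁ := hF.le_of_finIco_mem (by omega) (by omega) (by omega)
          (hsub' (hl' (hmem l'))) (hsub (hr (hmem r)))
        have h₂ := hF.le_of_finIco_mem (by omega) (by omega) (by omega)
          (hsub (hl (hmem l))) (hsub' (hr' (hmem r')))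
        omega
      rw [← hsplit] at hr'
      rw [ihl (by omega) hsplit (hl.trans hsub) (hl'.trans hsub'),
        ihr (by omega) (by omega) (hr.trans hsub) (hr'.trans hsub'), Subsingleton.elim x x']

lemma exists_intervalFamily_subset_of_union {F : Finset (Finset (Fin n))} {a : ℕ}
    {l r : BinaryTree Unit} (hn : a + l.numLeaves + r.numLeaves ≤ n)
    (hroot : finIco n a (a + l.numLeaves) ∪
      finIco n (a + l.numLeaves) (a + l.numLeaves + r.numLeaves) ∈ F)
    (hl : intervalFamily n a l ⊆ F) (hr : intervalFamily n (a + l.numLeaves) r ⊆ F) :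
    ∃ a' t, a' + t.numLeaves ≤ n ∧
      finIco n a (a + l.numLeaves) ∪ finIco n (a + l.numLeaves) (a + l.numLeaves + r.numLeaves) =
        finIco n a' (a' + t.numLeaves) ∧ intervalFamily n a' t ⊆ F := by
  rw [finIco_union_finIco (by omega) (by omega), add_assoc] at hroot ⊢
  refine ⟨a, .node () l r, by simpa [add_assoc] using hn, rfl, ?_⟩
  rw [intervalFamily, insert_subset_iff, union_subset_iff]
  exact ⟨hroot, hl, hr⟩

end intervalFamily

lemma IsAssemblyFamily.exists_intervalFamily_subset {n : ℕ} {F : Finset (Finset (Fin n))}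
    (hF : IsAssemblyFamily (SimpleGraph.pathGraph n) F) {U : Finset (Fin n)} (hU : U ∈ F) :
    ∃ a t, a + t.numLeaves ≤ n ∧ U = finIco n a (a + t.numLeaves) ∧
      intervalFamily n a t ⊆ F := by
  obtain ⟨-, -, hne, -, hsplit, -⟩ := hF
  induction hk : #U using Nat.strong_induction_on generalizing U with
  | _ k ih =>
  obtain hsmall | hbig := lt_or_ge k 2
  · obtain ⟨v, rfl⟩ : ∃ v, U = {v} := card_eq_one.1 (by have := (hne U hU).card_pos; omega)
    refine ⟨v, .nil, by simp, singleton_eq_finIco v, ?_⟩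
    simpa [intervalFamily, ← singleton_eq_finIco] using hU
  · obtain ⟨U₁, h₁, U₂, h₂, hdisj, rfl, v₁, hv₁, v₂, hv₂, hadj⟩ :=
      hsplit U hU (hk ▸ hbig)
    have hcard := card_union_of_disjoint hdisj
    have := (hne U₁ h₁).card_pos
    have := (hne U₂ h₂).card_pos
    obtain ⟨a₁, t₁, ht₁, rfl, hsub₁⟩ := ih _ (by omega) h₁ rfl
    obtain ⟨a₂, t₂, ht₂, rfl, hsub₂⟩ := ih _ (by omega) h₂ rfl
    rcases eq_or_eq_of_adj_of_disjoint hdisj hv₁ hv₂ hadj with rfl | rfl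
    · exact exists_intervalFamily_subset_of_union (by omega) hU hsub₁ hsub₂
    · rw [union_comm] at hU ⊢
      exact exists_intervalFamily_subset_of_union (by omega) hU hsub₂ hsub₁

lemma IsAssemblyFamily.exists_eq_intervalFamily {n : ℕ} {F : Finset (Finset (Fin n))}
    (hF : IsAssemblyFamily (SimpleGraph.pathGraph n) F) :
    ∃ t : BinaryTree Unit, t.numLeaves = n ∧ intervalFamily n 0 t = F := by
  obtain ⟨a, t, ht, huniv, hsub⟩ := hF.exists_intervalFamily_subset hF.2.1
  have := t.numLeaves_pos
  rw [← finIco_univ] at huniv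
  obtain ⟨rfl, hn⟩ := finIco_inj (by omega) le_rfl (by omega) ht huniv
  refine ⟨t, by omega, eq_of_subset_of_card_le hsub ?_⟩
  rw [card_intervalFamily ht, hF.2.2.2.2.2, Fintype.card_fin]
  omega

lemma assemblyTreeCount_pathGraph (n : ℕ) :
    assemblyTreeCount (SimpleGraph.pathGraph n) =
      Nat.card {t : BinaryTree Unit // t.numLeaves = n} := by
  refine (Nat.card_eq_of_bijective
    (fun t ↦ ⟨intervalFamily n 0 t.1, isAssemblyFamily_intervalFamily t.2⟩) ⟨?_, ?_⟩).symm
  · rintro ⟨t, ht⟩ ⟨t', ht'⟩ h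
    have h' : intervalFamily n 0 t = intervalFamily n 0 t' := congrArg Subtype.val h
    exact Subtype.ext (eq_of_intervalFamily_subset (isLaminar_intervalFamily 0 t) (by simp [ht])
      (ht.trans ht'.symm) subset_rfl h'.ge)
  · rintro ⟨F, hF⟩
    obtain ⟨t, ht, rfl⟩ := hF.exists_eq_intervalFamily
    exact ⟨⟨t, ht⟩, rfl⟩

lemma BinaryTree.card_numLeaves_eq_catalan (n : ℕ) :
    Nat.card {t : BinaryTree Unit // t.numLeaves = n + 1} = catalan n := by
  rw [← treesOfNumNodesEq_card_eq_catalan, ← Nat.card_eq_finsetCard]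
  exact Nat.card_congr (Equiv.subtypeEquivRight fun t ↦ by
    rw [mem_treesOfNumNodesEq, numLeaves_eq_numNodes_succ, add_left_inj])

/-- The number of assembly trees of the path `Pₙ` is the Catalan number
`(1/n) C(2n-2, n-1)`. -/
theorem assemblyTreeCount_path (n : ℕ) (hn : 1 ≤ n) :
    assemblyTreeCount (SimpleGraph.pathGraph n) = catalan (n - 1) ∧
    n * assemblyTreeCount (SimpleGraph.pathGraph n) = (2 * n - 2).choose (n - 1) := by
  obtain ⟨m, rfl⟩ := Nat.exists_eq_add_of_le' hn
  have hcount : assemblyTreeCount (SimpleGraph.pathGraph (m + 1)) = catalan m := by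
    rw [assemblyTreeCount_pathGraph, BinaryTree.card_numLeaves_eq_catalan]
  refine ⟨hcount, ?_⟩
  rw [hcount, succ_mul_catalan_eq_centralBinom, Nat.centralBinom, Nat.add_sub_cancel,
    show 2 * (m + 1) - 2 = 2 * m by omega]
end

section
/- The number of assembly trees of the cycle $C_n$ on $n$ vertices (using the edge gluing rule) is $\frac{1}{2}\binom{2n-2}{n-1}$. -/
/-!
Every label of an assembly tree of `Cₙ` is an arc, because two disjoint arcs joined by an edge
form an arc. Cutting off the root of a tree on a proper arc `s, s + 1, …, s + m` therefore
leaves trees on the prefix containing `s` and on the complementary suffix, which gives the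
Catalan recursion: such an arc has `catalan m` assembly trees. The two children of the root of
a tree on all of `Cₙ` are complementary arcs, and an ordered choice of them is fixed by the start
and the length of the first one; hence twice the number of trees is
`n * catalan (n - 1) = centralBinom (n - 1)`.
-/

open Finset

def SimpleGraph.Joins {V : Type*} (G : SimpleGraph V) (A B : Finset V) : Prop :=
  ∃ a ∈ A, ∃ b ∈ B, G.Adj a b

theorem SimpleGraph.Joins.symm {V : Type*} {G : SimpleGraph V} {A B : Finset V}
    (h : G.Joins A B) : G.Joins B A :=
  let ⟨a, ha, b, hb, hab⟩ := h; ⟨b, hb, a, ha, hab.symm⟩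

variable {V : Type*} [DecidableEq V]

/-- `IsAssemblyFamily` with the vertex set `univ` replaced by an arbitrary finite set `T`. -/
structure IsAssemblyFamilyOn (G : SimpleGraph V) (T : Finset V) (F : Finset (Finset V)) :
    Prop where
  singleton_mem : ∀ v ∈ T, {v} ∈ F
  self_mem : T ∈ F
  nonempty : ∀ U ∈ F, U.Nonempty
  subset : ∀ U ∈ F, U ⊆ T
  laminar : ∀ U₁ ∈ F, ∀ U₂ ∈ F, U₁ ⊆ U₂ ∨ U₂ ⊆ U₁ ∨ Disjoint U₁ U₂
  exists_split : ∀ U ∈ F, 2 ≤ #U →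
    ∃ U₁ ∈ F, ∃ U₂ ∈ F, Disjoint U₁ U₂ ∧ U₁ ∪ U₂ = U ∧ G.Joins U₁ U₂
  card_eq : #F = 2 * #T - 1

noncomputable def assemblyTreeCountOn (G : SimpleGraph V) (T : Finset V) : ℕ :=
  Nat.card {F // IsAssemblyFamilyOn G T F}

/-- The possible left children of the root of an assembly tree on `T`. -/
noncomputable def rootSplits (G : SimpleGraph V) (T : Finset V) : Finset (Finset V) :=
  open Classical in {A ∈ T.powerset | A.Nonempty ∧ A ≠ T ∧ G.Joins A (T \ A)}

variable {G : SimpleGraph V} {T A B : Finset V} {F F₁ F₂ : Finset (Finset V)}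

theorem isAssemblyFamily_iff_isAssemblyFamilyOn_univ [Fintype V] :
    IsAssemblyFamily G F ↔ IsAssemblyFamilyOn G univ F :=
  ⟨fun ⟨hs, hu, hne, hl, hsp, hc⟩ =>
    ⟨fun v _ => hs v, hu, hne, fun U _ => subset_univ U, hl, hsp, by rwa [card_univ]⟩,
   fun h => ⟨fun v => h.singleton_mem v (mem_univ v), h.self_mem, h.nonempty, h.laminar,
    h.exists_split, by rw [h.card_eq, card_univ]⟩⟩

theorem assemblyTreeCount_eq_assemblyTreeCountOn_univ [Fintype V] :
    assemblyTreeCount G = assemblyTreeCountOn G univ :=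
  Nat.card_congr <|
    Equiv.subtypeEquivRight fun _ => isAssemblyFamily_iff_isAssemblyFamilyOn_univ

instance : Finite {F // IsAssemblyFamilyOn G T F} :=
  Finite.of_injective
    (fun F => (⟨F.1, mem_powerset.2 fun U hU => mem_powerset.2 (F.2.subset U hU)⟩ :
      T.powerset.powerset))
    fun _ _ h => Subtype.ext (Subtype.mk.inj h)

theorem mem_rootSplits :
    A ∈ rootSplits G T ↔ A ⊆ T ∧ A.Nonempty ∧ A ≠ T ∧ G.Joins A (T \ A) := by
  simp [rootSplits]

theorem mem_rootSplits_union (hd : Disjoint A B) (hA : A.Nonempty) (hB : B.Nonempty)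
    (hj : G.Joins A B) : A ∈ rootSplits G (A ∪ B) := by
  refine mem_rootSplits.2 ⟨subset_union_left, hA, fun h => ?_, by
    rwa [union_sdiff_cancel_left hd]⟩
  obtain ⟨b, hb⟩ := hB
  exact disjoint_left.1 hd (h ▸ mem_union_right _ hb) hb

theorem sdiff_mem_rootSplits (hA : A ∈ rootSplits G T) : T \ A ∈ rootSplits G T := by
  obtain ⟨hAT, hne, hAT', hj⟩ := mem_rootSplits.1 hA
  refine mem_rootSplits.2 ⟨sdiff_subset, sdiff_nonempty.2 fun h => hAT' (hAT.antisymm h),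
    fun h => ?_, by rw [Finset.sdiff_sdiff_eq_self hAT]; exact hj.symm⟩
  obtain ⟨a, ha⟩ := hne
  exact (mem_sdiff.1 (h.symm ▸ hAT ha)).2 ha

theorem card_insert_union_of_disjoint {T₁ T₂ : Finset V} (hd : Disjoint T₁ T₂)
    (hT₁ : T₁.Nonempty) (hT₂ : T₂.Nonempty) (hne₁ : ∀ U ∈ F₁, U.Nonempty)
    (h₁ : ∀ U ∈ F₁, U ⊆ T₁) (h₂ : ∀ U ∈ F₂, U ⊆ T₂) :
    #(insert (T₁ ∪ T₂) (F₁ ∪ F₂)) = #F₁ + #F₂ + 1 := by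
  have hF : Disjoint F₁ F₂ := disjoint_left.2 fun U hU₁ hU₂ =>
    let ⟨x, hx⟩ := hne₁ U hU₁
    disjoint_left.1 hd (h₁ U hU₁ hx) (h₂ U hU₂ hx)
  have hnot : T₁ ∪ T₂ ∉ F₁ ∪ F₂ := by
    rw [mem_union]
    rintro (h | h)
    · obtain ⟨x, hx⟩ := hT₂
      exact disjoint_left.1 hd (h₁ _ h (mem_union_right _ hx)) hx
    · obtain ⟨x, hx⟩ := hT₁
      exact disjoint_left.1 hd hx (h₂ _ h (mem_union_left _ hx))
  rw [card_insert_of_notMem hnot, card_union_of_disjoint hF]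

namespace IsAssemblyFamilyOn

theorem two_mul_card_sub_one_le (hF : IsAssemblyFamilyOn G T F) {S : Finset V} (hS : S ∈ F) :
    2 * #S - 1 ≤ #{U ∈ F | U ⊆ S} := by
  induction hc : #S using Nat.strong_induction_on generalizing S with
  | _ c ih =>
  subst hc
  rcases lt_or_ge #S 2 with hlt | hge
  · have : 0 < #{U ∈ F | U ⊆ S} := card_pos.2 ⟨S, mem_filter.2 ⟨hS, subset_rfl⟩⟩
    omega
  obtain ⟨S₁, hS₁, S₂, hS₂, hd, rfl, -⟩ := hF.exists_split S hS hge
  have hpos₁ := (hF.nonempty S₁ hS₁).card_pos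
  have hpos₂ := (hF.nonempty S₂ hS₂).card_pos
  rw [card_union_of_disjoint hd] at ih ⊢
  have ih₁ := ih #S₁ (by omega) hS₁ rfl
  have ih₂ := ih #S₂ (by omega) hS₂ rfl
  have hsub : insert (S₁ ∪ S₂) ({U ∈ F | U ⊆ S₁} ∪ {U ∈ F | U ⊆ S₂}) ⊆
      {U ∈ F | U ⊆ S₁ ∪ S₂} := by
    intro U hU
    simp only [mem_insert, mem_union, mem_filter] at hU ⊢
    rcases hU with rfl | ⟨hU, hU'⟩ | ⟨hU, hU'⟩
    · exact ⟨hS, subset_rfl⟩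
    · exact ⟨hU, hU'.trans subset_union_left⟩
    · exact ⟨hU, hU'.trans subset_union_right⟩
  calc 2 * (#S₁ + #S₂) - 1 ≤ #{U ∈ F | U ⊆ S₁} + #{U ∈ F | U ⊆ S₂} + 1 := by omega
    _ = #(insert (S₁ ∪ S₂) ({U ∈ F | U ⊆ S₁} ∪ {U ∈ F | U ⊆ S₂})) :=
      (card_insert_union_of_disjoint hd (hF.nonempty S₁ hS₁) (hF.nonempty S₂ hS₂)
        (fun U hU => hF.nonempty U (mem_filter.1 hU).1) (fun U hU => (mem_filter.1 hU).2)
        (fun U hU => (mem_filter.1 hU).2)).symm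
    _ ≤ #{U ∈ F | U ⊆ S₁ ∪ S₂} := card_le_card hsub

theorem restrict (hF : IsAssemblyFamilyOn G T F) {S : Finset V} (hS : S ∈ F)
    (hcard : #{U ∈ F | U ⊆ S} = 2 * #S - 1) : IsAssemblyFamilyOn G S {U ∈ F | U ⊆ S} where
  singleton_mem v hv := mem_filter.2 ⟨hF.singleton_mem v (hF.subset S hS hv), by simpa⟩
  self_mem := mem_filter.2 ⟨hS, subset_rfl⟩
  nonempty U hU := hF.nonempty U (mem_filter.1 hU).1
  subset U hU := (mem_filter.1 hU).2
  laminar U₁ hU₁ U₂ hU₂ := hF.laminar U₁ (mem_filter.1 hU₁).1 U₂ (mem_filter.1 hU₂).1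
  exists_split U hU h2 := by
    obtain ⟨hUF, hUS⟩ := mem_filter.1 hU
    obtain ⟨U₁, hU₁, U₂, hU₂, hd, rfl, hj⟩ := hF.exists_split U hUF h2
    exact ⟨U₁, mem_filter.2 ⟨hU₁, subset_union_left.trans hUS⟩,
      U₂, mem_filter.2 ⟨hU₂, subset_union_right.trans hUS⟩, hd, rfl, hj⟩
  card_eq := hcard

theorem eq_insert_union (hF : IsAssemblyFamilyOn G T F) (hA : A ∈ F) (hA' : T \ A ∈ F) :
    F = insert T ({U ∈ F | U ⊆ A} ∪ {U ∈ F | U ⊆ T \ A}) := by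
  have hAT := hF.subset A hA
  refine subset_antisymm (fun U hU => ?_) (insert_subset hF.self_mem (union_subset
    (filter_subset _ _) (filter_subset _ _)))
  have hUT := hF.subset U hU
  simp only [mem_insert, mem_union, mem_filter, hU, true_and]
  rcases hF.laminar U hU (T \ A) hA' with h | h | h
  · exact Or.inr (Or.inr h)
  · rcases hF.laminar U hU A hA with h' | h' | h'
    · exact Or.inr (Or.inl h')
    · exact Or.inl (hUT.antisymm (union_sdiff_of_subset hAT ▸ union_subset h' h))
    · exact Or.inr (Or.inr (subset_sdiff.2 ⟨hUT, h'⟩))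
  · refine Or.inr (Or.inl fun x hx => ?_)
    by_contra hxA
    exact disjoint_left.1 h hx (mem_sdiff.2 ⟨hUT hx, hxA⟩)

/-- Both restrictions satisfy the lower bound `two_mul_card_sub_one_le`, and by
`eq_insert_union` their sizes add up to `#F - 1`, so the bound is attained for both. -/
theorem restrict_of_sdiff_mem (hF : IsAssemblyFamilyOn G T F) (hA : A ∈ F) (hA' : T \ A ∈ F) :
    IsAssemblyFamilyOn G A {U ∈ F | U ⊆ A} ∧
      IsAssemblyFamilyOn G (T \ A) {U ∈ F | U ⊆ T \ A} := by
  have hAT := hF.subset A hA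
  have hcard := card_insert_union_of_disjoint (F₂ := {U ∈ F | U ⊆ T \ A}) disjoint_sdiff
    (hF.nonempty A hA) (hF.nonempty _ hA') (fun U hU => hF.nonempty U (mem_filter.1 hU).1)
    (fun U hU => (mem_filter.1 hU).2) (fun U hU => (mem_filter.1 hU).2)
  rw [union_sdiff_of_subset hAT, ← hF.eq_insert_union hA hA', hF.card_eq,
    ← card_sdiff_add_card_eq_card hAT] at hcard
  have h₁ := hF.two_mul_card_sub_one_le hA
  have h₂ := hF.two_mul_card_sub_one_le hA'
  have hpos₁ := (hF.nonempty A hA).card_pos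
  have hpos₂ := (hF.nonempty _ hA').card_pos
  exact ⟨hF.restrict hA (by omega), hF.restrict hA' (by omega)⟩

theorem exists_sdiff_mem (hF : IsAssemblyFamilyOn G T F) {v : V} (hv : v ∈ T) (hT : 1 < #T) :
    ∃ A ∈ F, T \ A ∈ F ∧ A ∈ rootSplits G T ∧ v ∈ A := by
  obtain ⟨T₁, hT₁, T₂, hT₂, hd, rfl, hj⟩ := hF.exists_split T hF.self_mem hT
  have hne₁ := hF.nonempty T₁ hT₁
  have hne₂ := hF.nonempty T₂ hT₂
  rcases mem_union.1 hv with hv | hv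
  · refine ⟨T₁, hT₁, ?_, mem_rootSplits_union hd hne₁ hne₂ hj, hv⟩
    rwa [union_sdiff_cancel_left hd]
  · rw [union_comm]
    refine ⟨T₂, hT₂, ?_, mem_rootSplits_union hd.symm hne₂ hne₁ hj.symm, hv⟩
    rwa [union_sdiff_cancel_left hd.symm]

theorem glue {T₁ T₂ : Finset V} (h₁ : IsAssemblyFamilyOn G T₁ F₁)
    (h₂ : IsAssemblyFamilyOn G T₂ F₂) (hd : Disjoint T₁ T₂) (hj : G.Joins T₁ T₂) :
    IsAssemblyFamilyOn G (T₁ ∪ T₂) (insert (T₁ ∪ T₂) (F₁ ∪ F₂)) := by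
  have hsub₁ U (hU : U ∈ F₁) : U ⊆ T₁ ∪ T₂ := (h₁.subset U hU).trans subset_union_left
  have hsub₂ U (hU : U ∈ F₂) : U ⊆ T₁ ∪ T₂ := (h₂.subset U hU).trans subset_union_right
  have hcross U₁ (hU₁ : U₁ ∈ F₁) U₂ (hU₂ : U₂ ∈ F₂) : Disjoint U₁ U₂ :=
    disjoint_of_subset_left (h₁.subset U₁ hU₁) (disjoint_of_subset_right (h₂.subset U₂ hU₂) hd)
  have hcard : #(insert (T₁ ∪ T₂) (F₁ ∪ F₂)) = 2 * #(T₁ ∪ T₂) - 1 := by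
    have hpos₁ := (h₁.nonempty _ h₁.self_mem).card_pos
    have hpos₂ := (h₂.nonempty _ h₂.self_mem).card_pos
    rw [card_insert_union_of_disjoint hd (h₁.nonempty _ h₁.self_mem)
      (h₂.nonempty _ h₂.self_mem) h₁.nonempty h₁.subset h₂.subset, h₁.card_eq, h₂.card_eq,
      card_union_of_disjoint hd]
    omega
  refine ⟨?_, mem_insert_self _ _, ?_, ?_, ?_, ?_, hcard⟩ <;> simp only [mem_insert, mem_union]
  · rintro v (hv | hv)
    · exact Or.inr (Or.inl (h₁.singleton_mem v hv))
    · exact Or.inr (Or.inr (h₂.singleton_mem v hv))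
  · rintro U (rfl | hU | hU)
    · exact (h₁.nonempty _ h₁.self_mem).mono subset_union_left
    · exact h₁.nonempty U hU
    · exact h₂.nonempty U hU
  · rintro U (rfl | hU | hU)
    · exact subset_rfl
    · exact hsub₁ U hU
    · exact hsub₂ U hU
  · rintro U (rfl | hU | hU) U' (rfl | hU' | hU')
    · exact Or.inl subset_rfl
    · exact Or.inr (Or.inl (hsub₁ U' hU'))
    · exact Or.inr (Or.inl (hsub₂ U' hU'))
    · exact Or.inl (hsub₁ U hU)
    · exact h₁.laminar U hU U' hU'
    · exact Or.inr (Or.inr (hcross U hU U' hU'))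
    · exact Or.inl (hsub₂ U hU)
    · exact Or.inr (Or.inr (hcross U' hU' U hU).symm)
    · exact h₂.laminar U hU U' hU'
  · rintro U (rfl | hU | hU) hU₂
    · exact ⟨T₁, Or.inr (Or.inl h₁.self_mem), T₂, Or.inr (Or.inr h₂.self_mem), hd, rfl, hj⟩
    · obtain ⟨U₁, hU₁, U₂, hU₂, rest⟩ := h₁.exists_split U hU hU₂
      exact ⟨U₁, Or.inr (Or.inl hU₁), U₂, Or.inr (Or.inl hU₂), rest⟩
    · obtain ⟨U₁, hU₁, U₂, hU₂, rest⟩ := h₂.exists_split U hU hU₂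
      exact ⟨U₁, Or.inr (Or.inr hU₁), U₂, Or.inr (Or.inr hU₂), rest⟩

theorem glue_sdiff (h₁ : IsAssemblyFamilyOn G A F₁) (h₂ : IsAssemblyFamilyOn G (T \ A) F₂)
    (hA : A ∈ rootSplits G T) : IsAssemblyFamilyOn G T (insert T (F₁ ∪ F₂)) := by
  obtain ⟨hAT, -, -, hj⟩ := mem_rootSplits.1 hA
  simpa [union_sdiff_of_subset hAT] using h₁.glue h₂ disjoint_sdiff hj

theorem filter_insert_union {T₁ T₂ : Finset V} (h₁ : IsAssemblyFamilyOn G T₁ F₁)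
    (h₂ : IsAssemblyFamilyOn G T₂ F₂) (hd : Disjoint T₁ T₂) :
    {U ∈ insert (T₁ ∪ T₂) (F₁ ∪ F₂) | U ⊆ T₁} = F₁ := by
  have hout U (hU : U ∈ F₂) : ¬U ⊆ T₁ := fun hUT₁ =>
    let ⟨x, hx⟩ := h₂.nonempty U hU
    disjoint_left.1 hd (hUT₁ hx) (h₂.subset U hU hx)
  ext U
  simp only [mem_filter, mem_insert, mem_union]
  constructor
  · rintro ⟨rfl | hU | hU, hUT₁⟩
    · exact absurd (subset_union_right.trans hUT₁) (hout _ h₂.self_mem)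
    · exact hU
    · exact absurd hUT₁ (hout U hU)
  · exact fun hU => ⟨Or.inr (Or.inl hU), h₁.subset U hU⟩

theorem filter_insert_union_sdiff (h₁ : IsAssemblyFamilyOn G A F₁)
    (h₂ : IsAssemblyFamilyOn G (T \ A) F₂) (hAT : A ⊆ T) :
    {U ∈ insert T (F₁ ∪ F₂) | U ⊆ A} = F₁ ∧ {U ∈ insert T (F₁ ∪ F₂) | U ⊆ T \ A} = F₂ :=
  ⟨by simpa [union_sdiff_of_subset hAT] using h₁.filter_insert_union h₂ disjoint_sdiff,
   by simpa [sdiff_union_of_subset hAT, union_comm] using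
    h₂.filter_insert_union h₁ sdiff_disjoint⟩

theorem eq_of_insert_union_eq {A' : Finset V} {F₁' F₂' : Finset (Finset V)} {v : V}
    (h₁ : IsAssemblyFamilyOn G A F₁) (h₂ : IsAssemblyFamilyOn G (T \ A) F₂)
    (h₁' : IsAssemblyFamilyOn G A' F₁') (h₂' : IsAssemblyFamilyOn G (T \ A') F₂')
    (hA : A ∈ rootSplits G T) (hA' : A' ∈ rootSplits G T) (hv : v ∈ A) (hv' : v ∈ A')
    (h : insert T (F₁ ∪ F₂) = insert T (F₁' ∪ F₂')) : A = A' ∧ F₁ = F₁' ∧ F₂ = F₂' := by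
  have hsub {B C : Finset V} {E₁ E₂ : Finset (Finset V)} (hE₁ : IsAssemblyFamilyOn G C E₁)
      (hE₂ : IsAssemblyFamilyOn G (T \ C) E₂) (hB : B ∈ rootSplits G T) (hvB : v ∈ B)
      (hvC : v ∈ C) (hmem : B ∈ insert T (E₁ ∪ E₂)) : B ⊆ C := by
    simp only [mem_insert, mem_union] at hmem
    rcases hmem with hBT | hmem | hmem
    · exact absurd hBT (mem_rootSplits.1 hB).2.2.1
    · exact hE₁.subset B hmem
    · exact absurd hvC (mem_sdiff.1 (hE₂.subset B hmem hvB)).2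
  obtain rfl : A = A' :=
    (hsub h₁' h₂' hA hv hv' (h ▸ mem_insert_of_mem (mem_union_left _ h₁.self_mem))).antisymm
      (hsub h₁ h₂ hA' hv' hv (h ▸ mem_insert_of_mem (mem_union_left _ h₁'.self_mem)))
  obtain ⟨e₁, e₂⟩ := h₁.filter_insert_union_sdiff h₂ (mem_rootSplits.1 hA).1
  obtain ⟨e₁', e₂'⟩ := h₁'.filter_insert_union_sdiff h₂' (mem_rootSplits.1 hA).1
  exact ⟨rfl, by rw [← e₁, ← e₁', h], by rw [← e₂, ← e₂', h]⟩

end IsAssemblyFamilyOn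

theorem assemblyTreeCountOn_singleton (v : V) : assemblyTreeCountOn G {v} = 1 := by
  have hfam F : IsAssemblyFamilyOn G {v} F ↔ F = {{v}} := by
    refine ⟨fun hF => ?_, ?_⟩
    · obtain ⟨U, hU⟩ := card_eq_one.1 (hF.card_eq.trans (by simp))
      simpa [hU, eq_comm] using hF.self_mem
    · rintro rfl
      exact ⟨by simp, mem_singleton_self _, by simp, by simp, by simp, by simp, by simp⟩
  rw [assemblyTreeCountOn, Nat.card_congr (Equiv.subtypeEquivRight hfam), Nat.card_unique]

/-- Removing the root of an assembly tree on `T` leaves assembly trees on the child `A` containing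
`v` and on its complement `T \ A`; this is a bijection. -/
theorem assemblyTreeCountOn_eq_sum {v : V} (hv : v ∈ T) (hT : 1 < #T) :
    assemblyTreeCountOn G T = ∑ A ∈ rootSplits G T with v ∈ A,
      assemblyTreeCountOn G A * assemblyTreeCountOn G (T \ A) := by
  set I := {A ∈ rootSplits G T | v ∈ A}
  let glue : (Σ A : I, {F // IsAssemblyFamilyOn G A F} ×
      {F // IsAssemblyFamilyOn G (T \ A) F}) → {F // IsAssemblyFamilyOn G T F} :=
    fun x => ⟨_, x.2.1.2.glue_sdiff x.2.2.2 (mem_filter.1 x.1.2).1⟩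
  have hinj : Function.Injective glue := by
    rintro ⟨⟨A, hA⟩, ⟨F₁, h₁⟩, ⟨F₂, h₂⟩⟩ ⟨⟨A', hA'⟩, ⟨F₁', h₁'⟩, ⟨F₂', h₂'⟩⟩ h
    obtain ⟨hA, hvA⟩ := mem_filter.1 hA
    obtain ⟨hA', hvA'⟩ := mem_filter.1 hA'
    obtain ⟨rfl, rfl, rfl⟩ :=
      h₁.eq_of_insert_union_eq h₂ h₁' h₂' hA hA' hvA hvA' (Subtype.mk.inj h)
    rfl
  have hsurj : Function.Surjective glue := by
    rintro ⟨F, hF⟩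
    obtain ⟨A, hA, hA', hAI, hvA⟩ := hF.exists_sdiff_mem hv hT
    obtain ⟨h₁, h₂⟩ := hF.restrict_of_sdiff_mem hA hA'
    exact ⟨⟨⟨A, mem_filter.2 ⟨hAI, hvA⟩⟩, ⟨_, h₁⟩, ⟨_, h₂⟩⟩,
      Subtype.ext (hF.eq_insert_union hA hA').symm⟩
  rw [assemblyTreeCountOn, ← Nat.card_eq_of_bijective glue ⟨hinj, hsurj⟩, Nat.card_sigma,
    ← sum_coe_sort I]
  simp only [Nat.card_prod, assemblyTreeCountOn]

theorem two_mul_assemblyTreeCountOn_eq_sum (hT : 1 < #T) :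
    2 * assemblyTreeCountOn G T =
      ∑ A ∈ rootSplits G T, assemblyTreeCountOn G A * assemblyTreeCountOn G (T \ A) := by
  obtain ⟨v, hv⟩ : T.Nonempty := card_pos.1 (by omega)
  have hsub {A} (hA : A ∈ rootSplits G T) : A ⊆ T := (mem_rootSplits.1 hA).1
  have hswap : ∑ A ∈ rootSplits G T with v ∉ A,
      assemblyTreeCountOn G A * assemblyTreeCountOn G (T \ A) =
      ∑ A ∈ rootSplits G T with v ∈ A,
      assemblyTreeCountOn G A * assemblyTreeCountOn G (T \ A) := by
    refine sum_nbij' (T \ ·) (T \ ·) ?_ ?_ ?_ ?_ ?_ <;> simp only [mem_filter]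
    · exact fun A ⟨hA, hvA⟩ => ⟨sdiff_mem_rootSplits hA, mem_sdiff.2 ⟨hv, hvA⟩⟩
    · exact fun A ⟨hA, hvA⟩ => ⟨sdiff_mem_rootSplits hA, fun h => (mem_sdiff.1 h).2 hvA⟩
    · exact fun A ⟨hA, _⟩ => Finset.sdiff_sdiff_eq_self (hsub hA)
    · exact fun A ⟨hA, _⟩ => Finset.sdiff_sdiff_eq_self (hsub hA)
    · exact fun A ⟨hA, _⟩ => by rw [Finset.sdiff_sdiff_eq_self (hsub hA), mul_comm]
  rw [← sum_filter_add_sum_filter_not _ (v ∈ ·), hswap, ← assemblyTreeCountOn_eq_sum hv hT,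
    two_mul]

open Fin.NatCast Fin.CommRing

namespace SimpleGraph

variable {n : ℕ} [NeZero n]

theorem cycleGraph_adj_add_one (hn : 2 ≤ n) (v : Fin n) : (cycleGraph n).Adj v (v + 1) := by
  rw [cycleGraph_adj', add_sub_cancel_left, Fin.val_one', Nat.mod_eq_of_lt hn]
  exact Or.inr rfl

theorem eq_add_one_or_eq_add_one_of_cycleGraph_adj {u v : Fin n} (h : (cycleGraph n).Adj u v) :
    u = v + 1 ∨ v = u + 1 := by
  have key {x y : Fin n} (hxy : (x - y).val = 1) : x = y + 1 := by
    rw [← sub_eq_iff_eq_add', Fin.ext_iff, hxy, Fin.val_one', Nat.mod_eq_of_lt (by omega)]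
  exact (cycleGraph_adj'.1 h).imp key key

end SimpleGraph

namespace Fin

variable {n : ℕ} [NeZero n]

def arc (s : Fin n) (l : ℕ) : Finset (Fin n) :=
  (Finset.range l).image fun i : ℕ => s + (i : Fin n)

variable {s t u v : Fin n} {a b l : ℕ}

theorem mem_arc : v ∈ arc s l ↔ ∃ i < l, s + (i : Fin n) = v := by
  simp [arc]

theorem mem_arc_self (hl : 0 < l) : s ∈ arc s l :=
  mem_arc.2 ⟨0, hl, by simp⟩

theorem add_natCast_inj {i j : ℕ} (hi : i < n) (hj : j < n)
    (h : s + (i : Fin n) = s + (j : Fin n)) : i = j := by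
  simpa [Fin.ext_iff, Nat.mod_eq_of_lt, hi, hj] using add_left_cancel h

theorem card_arc (hl : l ≤ n) : #(arc s l) = l := by
  rw [arc, card_image_of_injOn, Finset.card_range]
  intro i hi j hj h
  exact add_natCast_inj (by simp at hi; omega) (by simp at hj; omega) h

theorem arc_one (s : Fin n) : arc s 1 = {s} := by
  simp [arc]

theorem arc_eq_univ (s : Fin n) : arc s n = univ :=
  eq_univ_of_card _ (by rw [card_arc le_rfl, Fintype.card_fin])

theorem arc_add (s : Fin n) (a b : ℕ) : arc s (a + b) = arc s a ∪ arc (s + (a : Fin n)) b := by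
  ext v
  simp only [mem_union, mem_arc]
  constructor
  · rintro ⟨i, hi, rfl⟩
    rcases lt_or_ge i a with h | h
    · exact Or.inl ⟨i, h, rfl⟩
    · refine Or.inr ⟨i - a, by omega, ?_⟩
      rw [add_assoc, ← Nat.cast_add, Nat.add_sub_cancel' h]
  · rintro (⟨i, hi, rfl⟩ | ⟨i, hi, rfl⟩)
    · exact ⟨i, by omega, rfl⟩
    · exact ⟨a + i, by omega, by rw [Nat.cast_add, add_assoc]⟩

theorem disjoint_arc_add (h : a + b ≤ n) : Disjoint (arc s a) (arc (s + (a : Fin n)) b) := by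
  refine disjoint_left.2 fun v hv hv' => ?_
  obtain ⟨i, hi, rfl⟩ := mem_arc.1 hv
  obtain ⟨j, hj, hij⟩ := mem_arc.1 hv'
  rw [add_assoc, ← Nat.cast_add] at hij
  have := add_natCast_inj (by omega) (by omega) hij
  omega

theorem arc_add_sdiff (h : a + b ≤ n) : arc s (a + b) \ arc s a = arc (s + (a : Fin n)) b := by
  rw [arc_add, union_sdiff_cancel_left (disjoint_arc_add h)]

theorem sub_one_notMem_arc (hl : l < n) : s - 1 ∉ arc s l := by
  rintro hs
  obtain ⟨i, hi, h⟩ := mem_arc.1 hs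
  have : s + ((i + 1 : ℕ) : Fin n) = s + ((0 : ℕ) : Fin n) := by
    rw [Nat.cast_add_one, ← add_assoc, h]; simp
  have := add_natCast_inj (by omega) (NeZero.pos n) this
  omega

theorem eq_of_mem_arc_of_sub_one_notMem (hv : v ∈ arc t a) (hv' : v - 1 ∉ arc t a) : v = t := by
  obtain ⟨i, hi, rfl⟩ := mem_arc.1 hv
  obtain _ | i := i
  · simp
  · refine absurd (mem_arc.2 ⟨i, by omega, ?_⟩) hv'
    rw [Nat.cast_add_one]; ring

theorem add_one_eq_of_mem_arc_of_add_one_notMem (hv : v ∈ arc t a) (hv' : v + 1 ∉ arc t a) :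
    v + 1 = t + (a : Fin n) := by
  obtain ⟨i, hi, rfl⟩ := mem_arc.1 hv
  have : i + 1 = a := by
    by_contra
    exact hv' (mem_arc.2 ⟨i + 1, by omega, by rw [Nat.cast_add_one, add_assoc]⟩)
  rw [← this, Nat.cast_add_one, add_assoc]

theorem eq_of_arc_subset_arc (h : arc t a ⊆ arc s l) (hs : s ∈ arc t a) (hl : l < n) : t = s :=
  (eq_of_mem_arc_of_sub_one_notMem hs fun h' => sub_one_notMem_arc hl (h h')).symm

theorem arc_injective_left (ha : 0 < a) (han : a < n) (h : arc s a = arc t a) : s = t :=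
  (eq_of_arc_subset_arc h.symm.subset (h ▸ mem_arc_self ha) han).symm

theorem arc_union_arc_of_add_one_mem (hd : Disjoint (arc s a) (arc t b)) (hu : u ∈ arc s a)
    (hu' : u + 1 ∈ arc t b) : arc s a ∪ arc t b = arc s (a + b) := by
  have ht : u + 1 = t :=
    eq_of_mem_arc_of_sub_one_notMem hu' (by simpa using disjoint_left.1 hd hu)
  rw [arc_add, ← ht, add_one_eq_of_mem_arc_of_add_one_notMem hu (disjoint_right.1 hd hu')]

end Fin

open SimpleGraph Fin

variable {n : ℕ} [NeZero n]

theorem IsAssemblyFamilyOn.exists_eq_arc {T : Finset (Fin n)} {F : Finset (Finset (Fin n))}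
    (hF : IsAssemblyFamilyOn (cycleGraph n) T F) {U : Finset (Fin n)} (hU : U ∈ F) :
    ∃ t, U = arc t #U := by
  induction hc : #U using Nat.strong_induction_on generalizing U with
  | _ c ih =>
  subst hc
  rcases lt_or_ge #U 2 with hlt | hge
  · obtain ⟨v, rfl⟩ := card_eq_one.1 <|
      show #U = 1 by have := (hF.nonempty U hU).card_pos; omega
    exact ⟨v, (arc_one v).symm⟩
  obtain ⟨U₁, hU₁, U₂, hU₂, hd, rfl, u₁, hu₁, u₂, hu₂, hadj⟩ := hF.exists_split U hU hge
  have hpos₁ := (hF.nonempty U₁ hU₁).card_pos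
  have hpos₂ := (hF.nonempty U₂ hU₂).card_pos
  rw [card_union_of_disjoint hd] at ih ⊢
  obtain ⟨t₁, ht₁⟩ := ih #U₁ (by omega) hU₁ rfl
  obtain ⟨t₂, ht₂⟩ := ih #U₂ (by omega) hU₂ rfl
  rw [ht₁, ht₂] at hd
  rw [ht₁] at hu₁
  rw [ht₂] at hu₂
  conv => enter [1, t, 1]; rw [ht₁, ht₂]
  rcases eq_add_one_or_eq_add_one_of_cycleGraph_adj hadj with rfl | rfl
  · rw [union_comm, add_comm]
    exact ⟨t₂, arc_union_arc_of_add_one_mem hd.symm hu₂ hu₁⟩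
  · exact ⟨t₁, arc_union_arc_of_add_one_mem hd hu₁ hu₂⟩

theorem exists_eq_arc_of_assemblyTreeCountOn_ne_zero {A : Finset (Fin n)}
    (h : assemblyTreeCountOn (cycleGraph n) A ≠ 0) : ∃ t, A = arc t #A :=
  let ⟨⟨_, hF⟩⟩ := (Nat.card_ne_zero.1 h).1
  hF.exists_eq_arc hF.self_mem

theorem arc_mem_rootSplits_cycleGraph (s : Fin n) {j b : ℕ} (hb : 0 < b) (h : j + 1 + b ≤ n) :
    arc s (j + 1) ∈ rootSplits (cycleGraph n) (arc s (j + 1 + b)) := by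
  rw [arc_add s (j + 1) b]
  refine mem_rootSplits_union (disjoint_arc_add h) ⟨s, mem_arc_self j.succ_pos⟩
    ⟨_, mem_arc_self hb⟩ ⟨s + (j : Fin n), mem_arc.2 ⟨j, j.lt_succ_self, rfl⟩, _,
      mem_arc_self hb, ?_⟩
  rw [Nat.cast_add_one, ← add_assoc]
  exact cycleGraph_adj_add_one (by omega) _

theorem catalan_ne_zero (m : ℕ) : catalan m ≠ 0 := by
  intro h
  have := Nat.centralBinom_pos m
  rw [← succ_mul_catalan_eq_centralBinom, h, mul_zero] at this
  exact lt_irrefl 0 this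

theorem assemblyTreeCountOn_arc {m : ℕ} (hm : m + 1 < n) (s : Fin n) :
    assemblyTreeCountOn (cycleGraph n) (arc s (m + 1)) = catalan m := by
  induction m using Nat.strong_induction_on generalizing s with
  | _ m ih =>
  cases m with
  | zero => rw [arc_one, assemblyTreeCountOn_singleton, catalan_zero]
  | succ k =>
  have hsplit (j : ℕ) (hj : j < k + 1) : k + 1 + 1 = j + 1 + (k - j + 1) := by omega
  rw [assemblyTreeCountOn_eq_sum (T := arc s (k + 1 + 1)) (mem_arc_self (by omega))
      (by rw [card_arc hm.le]; omega),
    catalan_succ, Fin.sum_univ_eq_sum_range (fun i => catalan i * catalan (k - i))]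
  symm
  refine sum_bij_ne_zero (fun j _ _ => arc s (j + 1)) (fun j hj _ => ?_)
    (fun j hj _ j' hj' _ h => ?_) (fun A hA hne => ?_) (fun j hj _ => ?_)
  · have hj := mem_range.1 hj
    rw [mem_filter, hsplit j hj]
    exact ⟨arc_mem_rootSplits_cycleGraph s (by omega) (by omega), mem_arc_self j.succ_pos⟩
  · have := congrArg Finset.card h
    rwa [card_arc (by simp at hj; omega), card_arc (by simp at hj'; omega), add_left_inj] at this
  · obtain ⟨hAI, hsA⟩ := mem_filter.1 hA
    obtain ⟨hAT, hAne, hAT', -⟩ := mem_rootSplits.1 hAI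
    obtain ⟨t, ht⟩ := exists_eq_arc_of_assemblyTreeCountOn_ne_zero (left_ne_zero_of_mul hne)
    obtain rfl := eq_of_arc_subset_arc (ht ▸ hAT) (ht ▸ hsA) hm
    have hcard := card_lt_card (ssubset_of_subset_of_ne hAT hAT')
    rw [card_arc hm.le] at hcard
    refine ⟨#A - 1, mem_range.2 (by omega),
      mul_ne_zero (catalan_ne_zero _) (catalan_ne_zero _), ?_⟩
    rw [Nat.sub_add_cancel hAne.card_pos, ← ht]
  · have hj := mem_range.1 hj
    rw [hsplit j hj, arc_add_sdiff (by omega), ih j (by omega) (by omega),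
      ih (k - j) (by omega) (by omega)]

theorem sum_rootSplits_univ_cycleGraph (m : ℕ) :
    ∑ A ∈ rootSplits (cycleGraph (m + 2)) univ, assemblyTreeCountOn (cycleGraph (m + 2)) A *
      assemblyTreeCountOn (cycleGraph (m + 2)) (univ \ A) =
      ∑ p ∈ (univ : Finset (Fin (m + 2))) ×ˢ range (m + 1), catalan p.2 * catalan (m - p.2) := by
  have hsplit (j : ℕ) (hj : j < m + 1) : j + 1 + (m - j + 1) = m + 2 := by omega
  symm
  refine sum_bij_ne_zero (fun p _ _ => arc p.1 (p.2 + 1)) (fun p hp _ => ?_)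
    (fun p hp _ p' hp' _ h => ?_) (fun A hA hne => ?_) (fun p hp _ => ?_)
  · have hj := mem_range.1 (mem_product.1 hp).2
    have := arc_mem_rootSplits_cycleGraph p.1 (j := p.2) (b := m - p.2 + 1) (by omega)
      (by omega)
    rwa [hsplit _ hj, arc_eq_univ] at this
  · have hj := mem_range.1 (mem_product.1 hp).2
    have hj' := mem_range.1 (mem_product.1 hp').2
    have hcard := congrArg Finset.card h
    rw [card_arc (by omega), card_arc (by omega), add_left_inj] at hcard
    rw [hcard] at h
    exact Prod.ext (arc_injective_left (by omega) (by omega) h) hcard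
  · obtain ⟨-, hAne, hAU, -⟩ := mem_rootSplits.1 hA
    obtain ⟨t, ht⟩ := exists_eq_arc_of_assemblyTreeCountOn_ne_zero (left_ne_zero_of_mul hne)
    have hcard := card_lt_card (ssubset_univ_iff.2 hAU)
    rw [card_univ, Fintype.card_fin] at hcard
    refine ⟨(t, #A - 1), mem_product.2 ⟨mem_univ _, mem_range.2 (by omega)⟩,
      mul_ne_zero (catalan_ne_zero _) (catalan_ne_zero _), ?_⟩
    rw [Nat.sub_add_cancel hAne.card_pos, ← ht]
  · have hj := mem_range.1 (mem_product.1 hp).2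
    have hcompl := arc_add_sdiff (s := p.1) (a := p.2 + 1) (b := m - p.2 + 1) (by omega)
    rw [hsplit _ hj, arc_eq_univ] at hcompl
    rw [hcompl, assemblyTreeCountOn_arc (by omega), assemblyTreeCountOn_arc (by omega)]

theorem two_mul_assemblyTreeCountOn_univ (m : ℕ) :
    2 * assemblyTreeCountOn (cycleGraph (m + 2)) univ = (m + 2) * catalan (m + 1) := by
  rw [two_mul_assemblyTreeCountOn_eq_sum (by rw [card_univ, Fintype.card_fin]; omega),
    sum_rootSplits_univ_cycleGraph]
  simp only [sum_product, Fin.sum_const, smul_eq_mul, catalan_succ,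
    Fin.sum_univ_eq_sum_range (fun i => catalan i * catalan (m - i))]

/-- The number of assembly trees of the cycle `Cₙ` is `(1/2) C(2n-2, n-1)`. -/
theorem assemblyTreeCount_cycle (n : ℕ) (hn : 3 ≤ n) :
    2 * assemblyTreeCount (SimpleGraph.cycleGraph n) = (2 * n - 2).choose (n - 1) := by
  obtain ⟨m, rfl⟩ : ∃ m, n = m + 2 := ⟨n - 2, by omega⟩
  rw [assemblyTreeCount_eq_assemblyTreeCountOn_univ, two_mul_assemblyTreeCountOn_univ,
    succ_mul_catalan_eq_centralBinom, Nat.centralBinom_eq_two_mul_choose]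
  congr 1
end

section
/- Let $a_n$ be the coefficient of $x^n y^n$ in the formal power series $1 - \sqrt{1-2x-2y+y^2}$. Then $a_0 = 0$, $a_1 = 1$, and for all $n \ge 1$, $a_{n+1} = \frac{3}{2}\cdot\frac{(3n-1)(3n+1)}{(n+1)^2} a_n$; equivalently $2(n+1)^2 a_{n+1} = 3(3n-1)(3n+1) a_n$. -/
/-! With `u = 1 - y` and `c(t) = ∑ Cₖ tᵏ` the Catalan series (`c = 1 + t c²`), the series
`T = 1 - u + (x/u) c(x/(2u²))` satisfies `(1 - T)² = u²(1 - 2t c)² = u²(1 - 4t) = u² - 2x`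
with `t = x/(2u²)`. A square root of `1 - 2x - 2y + y²` with constant term `1` is unique, because
`(1 - S)² - (1 - T)² = (T - S)(2 - S - T)` and `2 - S - T` is invertible; so `S = T`.
Expanding `(1 - y)^{-(2k+1)}` gives `a_{k+1} = Cₖ (3k+1 choose 2k) / 2ᵏ`, and the recurrence is
the quotient of consecutive values. -/

namespace PowerSeries

variable {A : Type*} [CommRing A]

noncomputable def scaledCatalan (z : A) : A⟦X⟧ :=
  rescale z (catalanSeries.map (Nat.castRingHom A))

theorem coeff_scaledCatalan (z : A) (k : ℕ) : coeff k (scaledCatalan z) = catalan k * z ^ k := by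
  simp [scaledCatalan, coeff_rescale, mul_comm]

theorem scaledCatalan_eq (z : A) : scaledCatalan z = 1 + C z * X * scaledCatalan z ^ 2 := by
  have h := congrArg (fun f => rescale z (f.map (Nat.castRingHom A))) catalanSeries_sq_mul_X_add_one
  simp only [map_add, map_mul, map_pow, map_X, map_one, rescale_X] at h
  rw [scaledCatalan]
  linear_combination -h

noncomputable def oneSubSqrt (u w z : A) : A⟦X⟧ :=
  C (1 - u) + C w * X * scaledCatalan z

theorem one_sub_oneSubSqrt_sq {u w z : A} (huw : u * w = 1) (hz : 2 * z = w ^ 2) :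
    (1 - oneSubSqrt u w z) ^ 2 = C (u ^ 2) - 2 * X := by
  have huw' : C u * C w = 1 := by rw [← map_mul, huw, map_one]
  have hz' : 2 * C z = C w ^ 2 := by rw [← map_pow, ← hz, map_mul, map_ofNat]
  simp only [oneSubSqrt, map_sub, map_one, map_pow]
  linear_combination (-2 * X) * scaledCatalan_eq z + (-2 * X * scaledCatalan z) * huw' -
    (X ^ 2 * scaledCatalan z ^ 2) * hz'

theorem coeff_zero_oneSubSqrt (u w z : A) : coeff 0 (oneSubSqrt u w z) = 1 - u := by
  simp [oneSubSqrt]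

theorem coeff_succ_oneSubSqrt (u w z : A) (k : ℕ) :
    coeff (k + 1) (oneSubSqrt u w z) = catalan k * w * z ^ k := by
  simp only [oneSubSqrt, map_add, coeff_C, Nat.add_one_ne_zero, if_false, zero_add, mul_assoc,
    coeff_C_mul, coeff_succ_X_mul, coeff_scaledCatalan]
  ring

end PowerSeries

namespace MvPowerSeries

variable {σ R : Type*} [CommRing R]

noncomputable def invOneSubX (i : σ) : MvPowerSeries σ R :=
  PowerSeries.toMvPowerSeries i (PowerSeries.invOneSubPow R 1).val

theorem one_sub_X_mul_invOneSubX (i : σ) : (1 - X i) * invOneSubX (R := R) i = 1 := by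
  have h := congrArg (PowerSeries.toMvPowerSeries (σ := σ) i)
    (PowerSeries.invOneSubPow R 1).inv_val
  rwa [map_mul, map_one, PowerSeries.invOneSubPow_inv_eq_one_sub_pow, pow_one, map_sub, map_one,
    PowerSeries.toMvPowerSeries_X] at h

theorem coeff_single_invOneSubX_pow (i : σ) (m j : ℕ) :
    coeff (Finsupp.single i j) (invOneSubX (R := R) i ^ (m + 1)) = (m + j).choose m := by
  have h : (PowerSeries.invOneSubPow R 1).val ^ (m + 1) =
      (PowerSeries.invOneSubPow R (m + 1)).val := by
    simp [PowerSeries.invOneSubPow_eq_inv_one_sub_pow]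
  rw [invOneSubX, ← map_pow, h, PowerSeries.invOneSubPow_val_succ_eq_mk_add_choose]
  have := coeff_embDomain_rename (R := R) (Function.Embedding.punit i)
    (PowerSeries.mk fun n => ((m + n).choose m : R)) (Finsupp.single () j)
  rw [Finsupp.embDomain_single] at this
  exact this.trans (PowerSeries.coeff_mk _ _)

theorem eq_of_one_sub_sq_eq (h2 : IsUnit (2 : R)) {S T : MvPowerSeries σ R}
    (hS : constantCoeff S = 0) (hT : constantCoeff T = 0) (h : (1 - S) ^ 2 = (1 - T) ^ 2) :
    S = T := by
  have hunit : IsUnit (2 - S - T) := by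
    rw [isUnit_iff_constantCoeff, map_sub, map_sub, hS, hT, map_ofNat]; simpa using h2
  have : (T - S) * (2 - S - T) = 0 := by linear_combination h
  simpa [sub_eq_zero, eq_comm] using hunit.mul_left_eq_zero.mp this

theorem coeff_cons_finSuccEquiv_symm {n : ℕ} (F : PowerSeries (MvPowerSeries (Fin n) R)) (k : ℕ)
    (x : Fin n →₀ ℕ) :
    coeff (Finsupp.cons k x) ((finSuccEquiv R n).symm F) = coeff x (PowerSeries.coeff k F) := by
  rw [← coeff_coeff_finSuccEquiv, AlgEquiv.apply_symm_apply]

end MvPowerSeries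

theorem succ_succ_mul_catalan_succ (n : ℕ) :
    (n + 2) * catalan (n + 1) = 2 * (2 * n + 1) * catalan n := by
  refine Nat.eq_of_mul_eq_mul_left n.succ_pos ?_
  calc (n + 1) * ((n + 2) * catalan (n + 1)) = (n + 1) * (n + 1).centralBinom := by
        rw [← succ_mul_catalan_eq_centralBinom]
    _ = (n + 1) * (2 * (2 * n + 1) * catalan n) := by
        rw [Nat.succ_mul_centralBinom_succ, ← succ_mul_catalan_eq_centralBinom]; ring

theorem Nat.add_one_mul_choose_add_three (r m : ℕ) :
    (m + 1) * (r + 1) * (r + 2) * (r + m + 3).choose (r + 2) =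
      (r + m + 1) * (r + m + 2) * (r + m + 3) * (r + m).choose r := by
  have h1 : (r + m + 1) * (r + m).choose r = (r + m + 1).choose (r + 1) * (r + 1) :=
    Nat.add_one_mul_choose_eq _ _
  have h2 : (r + m + 2) * (r + m + 1).choose (r + 1) = (r + m + 2).choose (r + 2) * (r + 2) :=
    Nat.add_one_mul_choose_eq _ _
  have h3 : (r + m + 2).choose (r + 2) * (r + m + 3) = (r + m + 3).choose (r + 2) * (m + 1) := by
    rw [Nat.choose_mul_succ_eq]; congr 1; omega
  linear_combination (r + 1) * (r + 2) * h3.symm + (r + 1) * (r + m + 3) * h2.symm +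
    (r + m + 2) * (r + m + 3) * h1.symm

def diagClosedForm : ℕ → ℚ
  | 0 => 0
  | k + 1 => catalan k / 2 ^ k * (3 * k + 1).choose (2 * k)

theorem diagClosedForm_recurrence (n : ℕ) (hn : 1 ≤ n) :
    2 * (n + 1) ^ 2 * diagClosedForm (n + 1) =
      3 * (3 * n - 1) * (3 * n + 1) * diagClosedForm n := by
  obtain ⟨k, rfl⟩ := Nat.exists_eq_add_of_le' hn
  have hC : ((k : ℚ) + 2) * catalan (k + 1) = 2 * (2 * k + 1) * catalan k := by
    exact_mod_cast succ_succ_mul_catalan_succ k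
  have hB : ((k : ℚ) + 1 + 1) * (2 * k + 1) * (2 * k + 2) * (3 * k + 4).choose (2 * k + 2)
      = (3 * k + 1 + 1) * (3 * k + 1 + 2) * (3 * k + 4) * (3 * k + 1).choose (2 * k) := by
    have h := Nat.add_one_mul_choose_add_three (2 * k) (k + 1)
    rw [show 2 * k + (k + 1) + 3 = 3 * k + 4 by ring, show 2 * k + (k + 1) = 3 * k + 1 by ring] at h
    exact_mod_cast h
  have key : ((k : ℚ) + 2) ^ 2 * catalan (k + 1) * (3 * k + 4).choose (2 * k + 2)
      = 3 * (3 * k + 2) * (3 * k + 4) * catalan k * (3 * k + 1).choose (2 * k) := by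
    refine mul_left_cancel₀ (show ((2 * k + 1) * (2 * k + 2) : ℚ) ≠ 0 by positivity) ?_
    linear_combination
      ((k + 2) * (2 * k + 2) * (2 * k + 1) * ((3 * k + 4).choose (2 * k + 2) : ℚ)) * hC +
      (2 * (2 * k + 1) * (catalan k : ℚ)) * hB
  simp only [diagClosedForm, show 3 * (k + 1) + 1 = 3 * k + 4 by ring,
    show 2 * (k + 1) = 2 * k + 2 by ring]
  push_cast
  linear_combination (1 / 2 ^ k : ℚ) * key

open MvPowerSeries

noncomputable def oneSubSqrtSeries : MvPowerSeries (Fin 2) ℚ :=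
  (finSuccEquiv ℚ 1).symm
    (PowerSeries.oneSubSqrt (1 - X 0) (invOneSubX 0) (C 2⁻¹ * invOneSubX 0 ^ 2))

theorem one_sub_oneSubSqrtSeries_sq :
    (1 - oneSubSqrtSeries) ^ 2 = 1 - 2 * X 0 - 2 * X 1 + (X 1) ^ 2 := by
  apply (finSuccEquiv ℚ 1).injective
  have hz : 2 * (C 2⁻¹ * invOneSubX 0 ^ 2) = (invOneSubX 0 ^ 2 : MvPowerSeries (Fin 1) ℚ) := by
    rw [← mul_assoc, ← map_ofNat C 2, ← map_mul]; norm_num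
  have hX1 : (X 1 : MvPowerSeries (Fin 2) ℚ) = X (Fin.succ 0) := rfl
  rw [map_pow, map_sub, map_one, oneSubSqrtSeries, AlgEquiv.apply_symm_apply,
    PowerSeries.one_sub_oneSubSqrt_sq (one_sub_X_mul_invOneSubX 0) hz, hX1]
  simp only [map_add, map_sub, map_mul, map_pow, map_one, map_ofNat, finSuccEquiv_X_zero,
    finSuccEquiv_X_succ]
  ring

theorem constantCoeff_oneSubSqrtSeries : constantCoeff oneSubSqrtSeries = 0 := by
  rw [← coeff_zero_eq_constantCoeff_apply, ← Finsupp.cons_zero_zero, oneSubSqrtSeries,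
    coeff_cons_finSuccEquiv_symm, PowerSeries.coeff_zero_oneSubSqrt]
  simp

theorem single_zero_add_single_one_eq_cons (m n : ℕ) :
    (Finsupp.single 0 m + Finsupp.single 1 n : Fin 2 →₀ ℕ) =
      Finsupp.cons m (Finsupp.single 0 n) := by
  ext i
  fin_cases i
  · simp
  · rw [show ((⟨1, by omega⟩ : Fin 2)) = Fin.succ 0 from rfl, Finsupp.cons_succ]
    simp

theorem coeff_oneSubSqrtSeries_diag_succ (k : ℕ) :
    coeff (Finsupp.single 0 (k + 1) + Finsupp.single 1 (k + 1)) oneSubSqrtSeries =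
      catalan k / 2 ^ k * (3 * k + 1).choose (2 * k) := by
  have hpow : ∀ w : MvPowerSeries (Fin 1) ℚ, (catalan k : MvPowerSeries (Fin 1) ℚ) * w *
      (C (2⁻¹ : ℚ) * w ^ 2) ^ k = C ((catalan k : ℚ) / 2 ^ k) * w ^ (2 * k + 1) := by
    intro w
    rw [div_eq_mul_inv, ← inv_pow, map_mul, map_pow, map_natCast]
    ring
  rw [single_zero_add_single_one_eq_cons, oneSubSqrtSeries, coeff_cons_finSuccEquiv_symm,
    PowerSeries.coeff_succ_oneSubSqrt, hpow (invOneSubX 0), coeff_C_mul,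
    coeff_single_invOneSubX_pow, show 2 * k + (k + 1) = 3 * k + 1 by ring]

theorem coeff_oneSubSqrtSeries_diag (n : ℕ) :
    coeff (Finsupp.single 0 n + Finsupp.single 1 n) oneSubSqrtSeries = diagClosedForm n := by
  cases n with
  | zero => simpa [diagClosedForm] using constantCoeff_oneSubSqrtSeries
  | succ k => exact coeff_oneSubSqrtSeries_diag_succ k

open MvPowerSeries in
/-- The diagonal coefficients `aₙ = [xⁿyⁿ](1 - √(1 - 2x - 2y + y²))` satisfy
`a₀ = 0`, `a₁ = 1`, and `2(n+1)² a_{n+1} = 3(3n-1)(3n+1) aₙ` for `n ≥ 1`. -/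
theorem diag_coeff_recurrence (S : MvPowerSeries (Fin 2) ℚ)
    (hS0 : constantCoeff S = 0)
    (hS : (1 - S) ^ 2 = 1 - 2 * X 0 - 2 * X 1 + (X 1) ^ 2)
    (a : ℕ → ℚ)
    (ha : ∀ n, a n = coeff (Finsupp.single 0 n + Finsupp.single 1 n) S) :
    a 0 = 0 ∧ a 1 = 1 ∧ ∀ n : ℕ, 1 ≤ n →
      2 * (n + 1) ^ 2 * a (n + 1) = 3 * (3 * n - 1) * (3 * n + 1) * a n := by
  have hS_eq : S = oneSubSqrtSeries := eq_of_one_sub_sq_eq (by norm_num) hS0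
    constantCoeff_oneSubSqrtSeries (hS.trans one_sub_oneSubSqrtSeries_sq.symm)
  have ha_eq : a = diagClosedForm := funext fun n => by
    rw [ha, hS_eq, coeff_oneSubSqrtSeries_diag]
  subst ha_eq
  exact ⟨rfl, by simp [diagClosedForm], diagClosedForm_recurrence⟩
end

section
/- If a univariate formal power series $u(x) \in \mathbb{C}[[x]]$ is algebraic over $\mathbb{C}(x)$, then it is $d$-finite, i.e., it satisfies a nontrivial linear differential equation $p_d(x)u^{(d)}(x) + \cdots + p_1(x)u'(x) + p_0(x)u(x) = 0$ with polynomial coefficients $p_i \in \mathbb{C}[x]$, $p_d \neq 0$. -/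
/-!
Choose `Q ∈ ℂ[x][T]` with `Q(u) = 0` and `f := Q'(u) ≠ 0` (an annihilator of minimal degree).
Differentiating `Q(u) = 0` gives `f · u' ∈ ℂ[x][u]`, hence `f · D(ℂ[x][u]) ⊆ ℂ[x][u]`, and the
Leibniz rule then shows that every derivative `u⁽ⁱ⁾` lands in `ℂ[x][u]` after multiplication by
a power of `f`. In the fraction field of `ℂ⟦x⟧` all the `u⁽ⁱ⁾` thus lie in the finite extension
`ℂ(x)(u)` of `ℂ(x)`, so they are linearly dependent over `ℂ(x)`, hence over `ℂ[x]`.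
-/

/-- A univariate formal power series is algebraic if it satisfies a nontrivial
polynomial equation with polynomial coefficients. -/
def PowerSeries.IsAlgebraicSeries {K : Type*} [CommRing K] (f : PowerSeries K) : Prop :=
  ∃ (d : ℕ) (P : ℕ → Polynomial K), (∃ i ≤ d, P i ≠ 0) ∧
    ∑ i ∈ Finset.range (d + 1), (P i : PowerSeries K) * f ^ i = 0

open Polynomial

section Derivation

variable {k R : Type*} [CommRing k] [CommRing R] [Algebra k R] (D : Derivation k R R)

theorem Derivation.exists_pow_mul_apply_mem {S : Subring R} {f : R} (hf : f ∈ S)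
    (hS : ∀ s ∈ S, f * D s ∈ S) {w : R} (hw : ∃ n, f ^ n * w ∈ S) :
    ∃ n, f ^ n * D w ∈ S := by
  obtain ⟨n, hn⟩ := hw
  -- working with `f ^ (n + 1)` avoids the truncated exponent `n - 1` of `leibniz_pow`
  have hn' : f ^ (n + 1) * w ∈ S := by
    rw [pow_succ', mul_assoc]
    exact S.mul_mem hf hn
  refine ⟨n + 3, ?_⟩
  have key : f ^ (n + 3) * D w =
      f * (f * D (f ^ (n + 1) * w)) - (n + 1 : ℕ) • (f * D f * (f ^ (n + 1) * w)) := by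
    rw [D.leibniz, D.leibniz_pow, Nat.add_sub_cancel]
    simp only [smul_eq_mul, nsmul_eq_mul]
    ring
  rw [key]
  exact S.sub_mem (S.mul_mem hf (hS _ hn')) (S.nsmul_mem (S.mul_mem (hS f hf) hn') _)

theorem Derivation.exists_pow_mul_iterate_mem {S : Subring R} {f : R} (hf : f ∈ S)
    (hS : ∀ s ∈ S, f * D s ∈ S) {x : R} (hx : x ∈ S) (i : ℕ) :
    ∃ n, f ^ n * (⇑D)^[i] x ∈ S := by
  induction i with
  | zero => exact ⟨0, by simpa using hx⟩
  | succ i ih =>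
    rw [Function.iterate_succ_apply']
    exact D.exists_pow_mul_apply_mem hf hS ih

variable {A : Type*} [CommRing A] [Algebra A R]

theorem Derivation.mul_apply_mem_adjoin {s : Set R} {f : R} (hf : f ∈ Algebra.adjoin A s)
    (hA : ∀ a : A, D (algebraMap A R a) ∈ Algebra.adjoin A s)
    (hs : ∀ y ∈ s, f * D y ∈ Algebra.adjoin A s) {z : R} (hz : z ∈ Algebra.adjoin A s) :
    f * D z ∈ Algebra.adjoin A s := by
  induction hz using Algebra.adjoin_induction with
  | mem y hy => exact hs y hy
  | algebraMap a => exact Subalgebra.mul_mem _ hf (hA a)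
  | add y z _ _ hy hz =>
    rw [map_add, mul_add]
    exact add_mem hy hz
  | mul y z hy' hz' hy hz =>
    rw [D.leibniz, smul_eq_mul, smul_eq_mul, mul_add, mul_left_comm, mul_left_comm f z]
    exact add_mem (mul_mem hy' hz) (mul_mem hz' hy)

theorem Derivation.apply_aeval_sub_mem_adjoin {x : R}
    (hA : ∀ a : A, D (algebraMap A R a) ∈ Algebra.adjoin A {x}) (p : A[X]) :
    D (aeval x p) - aeval x (derivative p) * D x ∈ Algebra.adjoin A {x} := by
  induction p using Polynomial.induction_on' with
  | add p q hp hq =>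
    rw [map_add, map_add, derivative_add, map_add, add_mul, add_sub_add_comm]
    exact add_mem hp hq
  | monomial n a =>
    have key : D (aeval x (monomial n a)) - aeval x (derivative (monomial n a)) * D x =
        D (algebraMap A R a) * x ^ n := by
      rw [aeval_monomial, derivative_monomial, aeval_monomial, D.leibniz, D.leibniz_pow]
      simp only [smul_eq_mul, nsmul_eq_mul, map_mul, _root_.map_natCast]
      ring
    rw [key]
    exact mul_mem (hA a) (pow_mem (Algebra.self_mem_adjoin_singleton A x) n)

theorem Derivation.exists_pow_mul_iterate_mem_adjoin {x : R}
    (hA : ∀ a : A, D (algebraMap A R a) ∈ Algebra.adjoin A {x}) {Q : A[X]} (hQ : aeval x Q = 0)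
    (i : ℕ) :
    ∃ n, aeval x (derivative Q) ^ n * (⇑D)^[i] x ∈ Algebra.adjoin A {x} := by
  have hQx : aeval x (derivative Q) * D x ∈ Algebra.adjoin A {x} := by
    simpa [hQ] using neg_mem (D.apply_aeval_sub_mem_adjoin hA Q)
  exact D.exists_pow_mul_iterate_mem (S := (Algebra.adjoin A {x}).toSubring)
    (aeval_mem_adjoin_singleton A x)
    (fun s hs => D.mul_apply_mem_adjoin (aeval_mem_adjoin_singleton A x) hA
      (by simpa using hQx) hs)
    (Algebra.self_mem_adjoin_singleton A x) i

end Derivation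

theorem IsAlgebraic.exists_aeval_eq_zero_aeval_derivative_ne_zero {A R : Type*} [CommRing A]
    [IsAddTorsionFree A] [CommRing R] [Algebra A R] [FaithfulSMul A R] {x : R}
    (hx : IsAlgebraic A x) : ∃ Q : A[X], aeval x Q = 0 ∧ aeval x (derivative Q) ≠ 0 := by
  obtain ⟨Q, hQ0, hQ⟩ := hx
  induction hn : Q.natDegree using Nat.strong_induction_on generalizing Q with
  | _ n ih =>
    by_cases hQ' : aeval x (derivative Q) = 0
    · have hdeg : Q.natDegree ≠ 0 := by
        intro h
        rw [eq_C_of_natDegree_eq_zero h, aeval_C,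
          map_eq_zero_iff _ (FaithfulSMul.algebraMap_injective A R)] at hQ
        exact hQ0 (by rw [eq_C_of_natDegree_eq_zero h, hQ, map_zero])
      exact ih _ (hn ▸ natDegree_derivative_lt hdeg) (derivative Q)
        (fun h => hdeg (derivative_eq_zero.1 h)) hQ' rfl
    · exact ⟨Q, hQ, hQ'⟩

theorem not_linearIndependent_of_exists_pow_mul_mem_adjoin {A R ι : Type*} [CommRing A]
    [IsDomain A] [CommRing R] [IsDomain R] [Algebra A R] [FaithfulSMul A R] [Infinite ι]
    {x f : R} (hx : IsAlgebraic A x) (hf : f ∈ Algebra.adjoin A {x}) (hf0 : f ≠ 0)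
    {w : ι → R} (hw : ∀ i, ∃ n, f ^ n * w i ∈ Algebra.adjoin A {x}) :
    ¬ LinearIndependent A w := by
  let := FractionRing.liftAlgebra A (FractionRing R)
  set K := FractionRing A
  set φ := IsScalarTower.toAlgHom A R (FractionRing R)
  have hφ : Function.Injective φ := IsFractionRing.injective R (FractionRing R)
  set E := IntermediateField.adjoin K {φ x}
  have hadjoin : Algebra.adjoin A {x} ≤ (E.toSubalgebra.restrictScalars A).comap φ :=
    Algebra.adjoin_singleton_le (IntermediateField.mem_adjoin_simple_self K (φ x))
  have hwE : ∀ i, φ (w i) ∈ E := fun i => by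
    obtain ⟨n, hn⟩ := hw i
    have hφf : φ f ^ n ≠ 0 := pow_ne_zero n ((map_ne_zero_iff φ hφ).2 hf0)
    rw [← mul_div_cancel_left₀ (φ (w i)) hφf, ← map_pow, ← map_mul]
    exact div_mem (hadjoin hn) (pow_mem (hadjoin hf) n)
  have : FiniteDimensional K E := IntermediateField.adjoin.finiteDimensional
    ((hx.algHom φ).extendScalars (IsFractionRing.injective A K)).isIntegral
  intro hli
  have hliK : LinearIndependent K (φ ∘ w) :=
    (LinearIndependent.iff_fractionRing A K).1
      (hli.map' φ.toLinearMap (LinearMap.ker_eq_bot.2 hφ))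
  exact Module.Finite.not_linearIndependent_of_infinite (R := K)
    (fun i => (⟨φ (w i), hwE i⟩ : E)) (LinearIndependent.of_comp E.val.toLinearMap hliK)

theorem exists_sum_range_smul_eq_zero_of_not_linearIndependent {R M : Type*} [Ring R]
    [AddCommGroup M] [Module R M] {v : ℕ → M} (h : ¬ LinearIndependent R v) :
    ∃ (d : ℕ) (p : ℕ → R), p d ≠ 0 ∧ ∑ i ∈ Finset.range (d + 1), p i • v i = 0 := by
  obtain ⟨l, hl, hl0⟩ : ∃ l : ℕ →₀ R, Finsupp.linearCombination R v l = 0 ∧ l ≠ 0 := by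
    simpa [linearIndependent_iff] using h
  have hne : l.support.Nonempty := Finsupp.support_nonempty_iff.2 hl0
  refine ⟨l.support.max' hne, l, Finsupp.mem_support_iff.1 (l.support.max'_mem hne), ?_⟩
  rw [← hl, Finsupp.linearCombination_apply,
    Finsupp.sum_of_support_subset l _ (fun i a => a • v i) (fun _ _ => zero_smul R _)]
  exact fun i hi => Finset.mem_range_succ_iff.2 (l.support.le_max' i hi)

instance PowerSeries.faithfulSMul_polynomial {K : Type*} [CommRing K] :
    FaithfulSMul K[X] (PowerSeries K) :=
  (faithfulSMul_iff_algebraMap_injective _ _).2 (Polynomial.coe_injective K)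

theorem PowerSeries.IsAlgebraicSeries.isAlgebraic {K : Type*} [CommRing K] {f : PowerSeries K}
    (hf : f.IsAlgebraicSeries) : IsAlgebraic K[X] f := by
  obtain ⟨d, P, ⟨i, hid, hi⟩, hP⟩ := hf
  refine ⟨∑ j ∈ Finset.range (d + 1), Polynomial.C (P j) * Polynomial.X ^ j, fun h => hi ?_, ?_⟩
  · simpa [finsetSum_coeff, coeff_C_mul_X_pow, Nat.lt_succ_iff, hid] using
      congrArg (Polynomial.coeff · i) h
  · simpa [map_sum, PowerSeries.algebraMap_apply'] using hP

/-- If a univariate formal power series is algebraic then it is `d`-finite: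
it satisfies a nontrivial linear differential equation
`p_d u⁽ᵈ⁾ + ⋯ + p₁ u' + p₀ u = 0` with polynomial coefficients. -/
theorem algebraic_dfinite (u : PowerSeries ℂ) (hu : u.IsAlgebraicSeries) :
    ∃ (d : ℕ) (p : ℕ → Polynomial ℂ), p d ≠ 0 ∧
      ∑ i ∈ Finset.range (d + 1),
        (p i : PowerSeries ℂ) * (PowerSeries.derivativeFun)^[i] u = 0 := by
  set D := PowerSeries.derivative ℂ
  have hD : ∀ p : ℂ[X], D (algebraMap ℂ[X] (PowerSeries ℂ) p) ∈ Algebra.adjoin ℂ[X] {u} :=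
    fun p => by
      rw [show D (algebraMap _ _ p) = algebraMap _ _ (derivative p) from
        PowerSeries.derivative_coe p]
      exact Subalgebra.algebraMap_mem _ _
  obtain ⟨Q, hQ, hQ'⟩ := hu.isAlgebraic.exists_aeval_eq_zero_aeval_derivative_ne_zero
  have hli : ¬ LinearIndependent ℂ[X] fun i => (⇑D)^[i] u :=
    not_linearIndependent_of_exists_pow_mul_mem_adjoin hu.isAlgebraic
      (aeval_mem_adjoin_singleton _ _) hQ' (D.exists_pow_mul_iterate_mem_adjoin hD hQ)
  obtain ⟨d, p, hpd, hp⟩ := exists_sum_range_smul_eq_zero_of_not_linearIndependent hli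
  refine ⟨d, p, hpd, ?_⟩
  rw [← hp]
  simp only [Algebra.smul_def]
  -- `PowerSeries.derivativeFun` unfolds to `⇑(PowerSeries.derivative ℂ)`
  rfl
end

section
/- A sequence $f(0), f(1), \ldots$ of complex numbers is $p$-recursive (satisfies a nontrivial linear recurrence with polynomial coefficients $P_k(n+k)f(n+k) + \cdots + P_0(n)f(n) = 0$ for all $n$, with $P_k \neq 0$) if and only if its ordinary generating function $u(x) = \sum_{n\ge 0} f(n)x^n$ is $d$-finite (satisfies a nontrivial linear ODE with polynomial coefficients). -/
/-!
With the Euler operator `θ = X d/dX`, the `n`-th coefficient of `P(θ) u` is `P(n) f(n)`, so a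
recurrence `∑ P_i(n+i) f(n+i) = 0` says that `V = ∑ X^(k-i) P_i(θ) u` is a polynomial of degree
`< k`, hence `(d/dX)^k V = 0`. Since `θ`-polynomials are differential operators with polynomial
coefficients, this is a linear ODE for `u`; it is nontrivial because the operator does not kill
`X^(n+k)` when `P_k(n+k) ≠ 0`.

Conversely, if `N` bounds the degrees of the `p_i`, the coefficient of `X^(n+N)` in
`∑ p_i u^(i)` is a combination of `f(n), …, f(n+N+d)` whose coefficients are built from the
falling factorials `(m)_i`. The coefficient of the shift `d + N - deg p_d` has `X^d`-coefficient
`lc(p_d) ≠ 0`, because `(m)_i` has degree `i`.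
-/

open PowerSeries Polynomial Finset

theorem Finset.sum_range_findGreatest {M : Type*} [AddCommMonoid M] {P : ℕ → Prop}
    [DecidablePred P] {F : ℕ → M} (hF : ∀ i, ¬P i → F i = 0) (K : ℕ) :
    ∑ i ∈ range (Nat.findGreatest P K + 1), F i = ∑ i ∈ range (K + 1), F i := by
  refine sum_subset (range_subset_range.2 (by simpa using Nat.findGreatest_le K))
    fun i hi hi' ↦ ?_
  simp only [mem_range, not_lt] at hi hi'
  exact hF i (Nat.findGreatest_is_greatest hi' (by omega))

theorem Polynomial.exists_eval_natCast_add_ne_zero {R : Type*} [CommRing R] [IsDomain R]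
    [CharZero R] {P : R[X]} (hP : P ≠ 0) (k : ℕ) : ∃ n : ℕ, P.eval ((n + k : ℕ) : R) ≠ 0 := by
  by_contra! h
  refine hP (P.eq_zero_of_infinite_isRoot (Set.infinite_of_injective_forall_mem
    (f := fun n : ℕ ↦ ((n + k : ℕ) : R)) (fun m n hmn ↦ ?_) h))
  simpa using hmn

namespace PowerSeries

variable {R : Type*} [CommRing R]

theorem polynomial_smul_eq_coe_mul (p : R[X]) (u : R⟦X⟧) : p • u = (p : R⟦X⟧) * u := rfl

variable (R) in
noncomputable def polyDiffOps : Submodule R[X] (Module.End R R⟦X⟧) :=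
  Submodule.span R[X] (Set.range ((d⁄dX R).toLinearMap ^ ·))

theorem derivative_mul_mem_polyDiffOps {L : Module.End R R⟦X⟧} (hL : L ∈ polyDiffOps R) :
    (d⁄dX R).toLinearMap * L ∈ polyDiffOps R := by
  induction hL using Submodule.span_induction with
  | mem _ h =>
    obtain ⟨i, rfl⟩ := h
    exact Submodule.subset_span ⟨i + 1, pow_succ' _ _⟩
  | zero => simp
  | add _ _ _ _ h₁ h₂ => simpa [mul_add] using add_mem h₁ h₂
  | smul a L hL h =>
    have leibniz : (d⁄dX R).toLinearMap * (a • L) =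
        Polynomial.derivative a • L + a • ((d⁄dX R).toLinearMap * L) := by
      ext1 u
      simp only [Module.End.mul_apply, LinearMap.smul_apply, LinearMap.add_apply,
        polynomial_smul_eq_coe_mul, Derivation.coeFn_coe,
        Derivation.leibniz, derivative_coe, smul_eq_mul]
      ring
    rw [leibniz]
    exact add_mem (Submodule.smul_mem _ _ hL) (Submodule.smul_mem _ _ h)

theorem pow_derivative_mul_mem_polyDiffOps {L : Module.End R R⟦X⟧} (hL : L ∈ polyDiffOps R)
    (k : ℕ) : (d⁄dX R).toLinearMap ^ k * L ∈ polyDiffOps R := by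
  induction k with
  | zero => simpa using hL
  | succ k ih => simpa [pow_succ', mul_assoc] using derivative_mul_mem_polyDiffOps ih

theorem exists_sum_eq_of_mem_polyDiffOps {L : Module.End R R⟦X⟧} (hL : L ∈ polyDiffOps R)
    (hL₀ : L ≠ 0) : ∃ (d : ℕ) (p : ℕ → R[X]), p d ≠ 0 ∧
      ∀ u, ∑ i ∈ range (d + 1), (p i : R⟦X⟧) * (d⁄dX R)^[i] u = L u := by
  obtain ⟨c, rfl⟩ := Finsupp.mem_span_range_iff_exists_finsupp.1 hL
  have hc : c.support.Nonempty := Finsupp.support_nonempty_iff.2 (by rintro rfl; simp at hL₀)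
  refine ⟨c.support.max' hc, c, Finsupp.mem_support_iff.1 (max'_mem _ hc), fun u ↦ ?_⟩
  rw [Finsupp.sum_of_support_subset c (s := range (c.support.max' hc + 1))
    (fun i hi ↦ mem_range.2 (Nat.lt_succ_of_le (le_max' _ i hi))) _ (by simp)]
  simp [Module.End.pow_apply, polynomial_smul_eq_coe_mul]

variable (R) in
noncomputable def eulerOp : Module.End R R⟦X⟧ :=
  (Polynomial.X : R[X]) • (d⁄dX R).toLinearMap

theorem coeff_eulerOp (u : R⟦X⟧) (n : ℕ) : coeff n (eulerOp R u) = n * coeff n u := by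
  rcases n with _ | n
  · simp [eulerOp, polynomial_smul_eq_coe_mul]
  · simp [eulerOp, polynomial_smul_eq_coe_mul, coeff_derivative, mul_comm]

theorem coeff_aeval_eulerOp (P : R[X]) (u : R⟦X⟧) (n : ℕ) :
    coeff n (Polynomial.aeval (eulerOp R) P u) = P.eval (n : R) * coeff n u := by
  induction P using Polynomial.induction_on with
  | C a => simp [Algebra.algebraMap_eq_smul_one]
  | add P Q hP hQ => simp [hP, hQ, add_mul]
  | monomial k a h =>
    rw [pow_succ', ← mul_assoc, mul_comm _ Polynomial.X, mul_assoc, map_mul, Polynomial.aeval_X,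
      Module.End.mul_apply, coeff_eulerOp, h]
    simp only [eval_mul, eval_X]
    ring

theorem aeval_eulerOp_mem_polyDiffOps (P : R[X]) :
    Polynomial.aeval (eulerOp R) P ∈ polyDiffOps R := by
  induction P using Polynomial.induction_on with
  | C a =>
    have : Polynomial.aeval (eulerOp R) (Polynomial.C a) =
        Polynomial.C a • (d⁄dX R).toLinearMap ^ 0 := by
      ext1 u
      simp [Algebra.algebraMap_eq_smul_one, polynomial_smul_eq_coe_mul, smul_eq_C_mul]
    exact this ▸ Submodule.smul_mem _ _ (Submodule.subset_span ⟨0, rfl⟩)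
  | add P Q hP hQ => simpa using add_mem hP hQ
  | monomial k a h =>
    rw [pow_succ', ← mul_assoc, mul_comm _ Polynomial.X, mul_assoc, map_mul, Polynomial.aeval_X,
      eulerOp, smul_mul_assoc]
    exact Submodule.smul_mem _ _ (derivative_mul_mem_polyDiffOps h)

variable (R) in
noncomputable def recurrenceOp (P : ℕ → R[X]) (k : ℕ) : Module.End R R⟦X⟧ :=
  ∑ i ∈ range (k + 1), (Polynomial.X ^ (k - i) : R[X]) • Polynomial.aeval (eulerOp R) (P i)

theorem recurrenceOp_mem_polyDiffOps (P : ℕ → R[X]) (k : ℕ) :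
    recurrenceOp R P k ∈ polyDiffOps R :=
  sum_mem fun i _ ↦ Submodule.smul_mem _ _ (aeval_eulerOp_mem_polyDiffOps (P i))

theorem coeff_recurrenceOp (P : ℕ → R[X]) (k : ℕ) (u : R⟦X⟧) (n : ℕ) :
    coeff (n + k) (recurrenceOp R P k u) =
      ∑ i ∈ range (k + 1), (P i).eval ((n + i : ℕ) : R) * coeff (n + i) u := by
  simp only [recurrenceOp, LinearMap.sum_apply, map_sum, LinearMap.smul_apply,
    polynomial_smul_eq_coe_mul, Polynomial.coe_pow, Polynomial.coe_X, coeff_X_pow_mul']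
  refine sum_congr rfl fun i hi ↦ ?_
  rw [if_pos (by omega), show n + k - (k - i) = n + i by simp at hi; omega, coeff_aeval_eulerOp]

theorem exists_diffEq_of_recurrence [IsDomain R] [CharZero R] {f : ℕ → R} {k : ℕ}
    {P : ℕ → R[X]} (hPk : P k ≠ 0)
    (hrec : ∀ n, ∑ i ∈ range (k + 1), (P i).eval ((n + i : ℕ) : R) * f (n + i) = 0) :
    ∃ (d : ℕ) (p : ℕ → R[X]), p d ≠ 0 ∧
      ∑ i ∈ range (d + 1), (p i : R⟦X⟧) * (d⁄dX R)^[i] (mk f) = 0 := by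
  set L := (d⁄dX R).toLinearMap ^ k * recurrenceOp R P k
  have coeff_L (u : R⟦X⟧) (n : ℕ) : coeff n (L u) = (n + 1).ascFactorial k *
      ∑ i ∈ range (k + 1), (P i).eval ((n + i : ℕ) : R) * coeff (n + i) u := by
    rw [Module.End.mul_apply, Module.End.pow_apply, Derivation.coeFn_coe,
      coeff_iterate_derivative, coeff_recurrenceOp]
  obtain ⟨n, hn⟩ := exists_eval_natCast_add_ne_zero hPk k
  have hL₀ : L ≠ 0 := by
    have hcoeff : coeff n (L (X ^ (n + k))) =
        (n + 1).ascFactorial k * (P k).eval ((n + k : ℕ) : R) := by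
      rw [coeff_L, sum_eq_single_of_mem k (self_mem_range_succ k) fun i _ hik ↦ by
        rw [coeff_X_pow, if_neg (by omega), mul_zero], coeff_X_pow_self, mul_one]
    intro h
    rw [h, LinearMap.zero_apply, map_zero] at hcoeff
    exact mul_ne_zero (Nat.cast_ne_zero.2 (Nat.ascFactorial_pos _ _).ne') hn hcoeff.symm
  obtain ⟨d, p, hpd, hp⟩ := exists_sum_eq_of_mem_polyDiffOps
    (pow_derivative_mul_mem_polyDiffOps (recurrenceOp_mem_polyDiffOps P k) k) hL₀
  refine ⟨d, p, hpd, (hp _).trans (ext fun n ↦ ?_)⟩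
  rw [coeff_L]
  simp only [coeff_mk, hrec, mul_zero, map_zero]

theorem coeff_add_coe_mul {p : R[X]} {N : ℕ} (hp : p.natDegree ≤ N) (w : R⟦X⟧) (n : ℕ) :
    coeff (n + N) ((p : R⟦X⟧) * w) =
      ∑ t ∈ range (N + 1), p.coeff (N - t) * coeff (n + t) w := by
  rw [coeff_mul, Finset.Nat.sum_antidiagonal_eq_sum_range_succ_mk]
  simp only [Polynomial.coeff_coe]
  rw [← sum_subset (range_subset_range.2 (by omega : N + 1 ≤ n + N + 1)) fun a _ ha ↦ by
    rw [coeff_eq_zero_of_natDegree_lt (by simp at ha; omega), zero_mul], ← sum_range_reflect]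
  refine sum_congr rfl fun t ht ↦ ?_
  rw [mem_range] at ht
  rw [show N + 1 - 1 - t = N - t by omega, show n + N - (N - t) = n + t by omega]

variable (R) in
/-- In the coefficient of `X^(n+N)` in `∑ p_i u^(i)`, the monomial `X^(N-t)` of `p_i` contributes
`(p_i)_(N-t) (n+s)_i f(n+s)` with shift `s = i + t`. -/
noncomputable def diffOpRecurrenceCoeff (p : ℕ → R[X]) (d N s : ℕ) : R[X] :=
  ∑ i ∈ range (d + 1), ∑ t ∈ range (N + 1),
    if i + t = s then (p i).coeff (N - t) • descPochhammer R i else 0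

theorem coeff_add_sum_mul_iterate_derivative {p : ℕ → R[X]} {d N : ℕ}
    (hN : ∀ i ≤ d, (p i).natDegree ≤ N) (v : R⟦X⟧) (n : ℕ) :
    coeff (n + N) (∑ i ∈ range (d + 1), (p i : R⟦X⟧) * (d⁄dX R)^[i] v) =
      ∑ s ∈ range (N + d + 1),
        (diffOpRecurrenceCoeff R p d N s).eval ((n + s : ℕ) : R) * coeff (n + s) v := by
  simp only [diffOpRecurrenceCoeff, eval_finsetSum, sum_mul, map_sum]
  rw [sum_comm]
  refine sum_congr rfl fun i hi ↦ ?_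
  rw [coeff_add_coe_mul (hN i (by simpa [Nat.lt_succ_iff] using hi)), sum_comm]
  refine sum_congr rfl fun t ht ↦ ?_
  simp only [apply_ite (eval _), eval_zero, ite_mul, zero_mul, sum_ite_eq]
  rw [mem_range] at hi ht
  rw [if_pos (by simp; omega), coeff_iterate_derivative, eval_smul,
    descPochhammer_eval_eq_descFactorial, show n + (i + t) = n + t + i by ring,
    Nat.add_descFactorial_eq_ascFactorial, smul_eq_mul, mul_assoc]

theorem coeff_diffOpRecurrenceCoeff [IsDomain R] (p : ℕ → R[X]) (d : ℕ) {N j : ℕ}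
    (hj : j ≤ N) :
    (diffOpRecurrenceCoeff R p d N (d + (N - j))).coeff d = (p d).coeff j := by
  have hmonic : (descPochhammer R d).coeff d = 1 := by
    simpa using (monic_descPochhammer R d).coeff_natDegree
  simp only [diffOpRecurrenceCoeff, finsetSum_coeff, apply_ite (Polynomial.coeff · d),
    Polynomial.coeff_smul, Polynomial.coeff_zero, smul_eq_mul]
  rw [sum_eq_single_of_mem d (by simp), sum_eq_single_of_mem (N - j) (mem_range.2 (by omega))]
  · simp [show N - (N - j) = j by omega, hmonic]
  · intro t _ ht
    rw [if_neg (by omega)]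
  · intro i hi hid
    refine sum_eq_zero fun t _ ↦ ?_
    rw [coeff_eq_zero_of_natDegree_lt (p := descPochhammer R i), mul_zero, ite_self]
    rw [descPochhammer_natDegree]
    simp only [mem_range] at hi
    omega

theorem exists_recurrence_of_diffEq [IsDomain R] {f : ℕ → R} {d : ℕ} {p : ℕ → R[X]}
    (hpd : p d ≠ 0)
    (hode : ∑ i ∈ range (d + 1), (p i : R⟦X⟧) * (d⁄dX R)^[i] (mk f) = 0) :
    ∃ (k : ℕ) (P : ℕ → R[X]), P k ≠ 0 ∧
      ∀ n, ∑ i ∈ range (k + 1), (P i).eval ((n + i : ℕ) : R) * f (n + i) = 0 := by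
  classical
  set N := (range (d + 1)).sup fun i ↦ (p i).natDegree
  have hN (i : ℕ) (hi : i ≤ d) : (p i).natDegree ≤ N :=
    le_sup (f := fun i ↦ (p i).natDegree) (mem_range.2 (by omega))
  set Q := diffOpRecurrenceCoeff R p d N with hQ
  have hQ₀ : Q (d + (N - (p d).natDegree)) ≠ 0 := fun h ↦ hpd <| leadingCoeff_eq_zero.1 <| by
    rw [leadingCoeff, ← coeff_diffOpRecurrenceCoeff p d (hN d le_rfl), ← hQ, h, coeff_zero]
  refine ⟨Nat.findGreatest (Q · ≠ 0) (N + d), Q,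
    Nat.findGreatest_spec (P := (Q · ≠ 0)) (by omega) hQ₀, fun n ↦ ?_⟩
  rw [sum_range_findGreatest fun s hs ↦ by rw [not_not.1 hs, eval_zero, zero_mul]]
  simpa [hode] using (coeff_add_sum_mul_iterate_derivative hN (mk f) n).symm

end PowerSeries

/-- A sequence `f` is `p`-recursive iff its ordinary generating function
`∑ f(n) xⁿ` is `d`-finite. -/
theorem precursive_iff_dfinite (f : ℕ → ℂ) :
    (∃ (k : ℕ) (P : ℕ → Polynomial ℂ), P k ≠ 0 ∧
      ∀ n : ℕ, ∑ i ∈ Finset.range (k + 1),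
        (P i).eval ((n + i : ℕ) : ℂ) * f (n + i) = 0) ↔
    (∃ (d : ℕ) (p : ℕ → Polynomial ℂ), p d ≠ 0 ∧
      ∑ i ∈ Finset.range (d + 1),
        (p i : PowerSeries ℂ) * (PowerSeries.derivativeFun)^[i] (PowerSeries.mk f) = 0) :=
  ⟨fun ⟨_, _, hPk, hrec⟩ ↦ exists_diffEq_of_recurrence hPk hrec,
    fun ⟨_, _, hpd, hode⟩ ↦ exists_recurrence_of_diffEq hpd hode⟩
end
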